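/- arXiv:1711.02747 — 13 statements merged into one kernel-verified Lean document; each statement's English description precedes it below -/
import Mathlib

section
/- Let ψ : E → ℝ be convex on the convex set Q, let z ∈ E and y ∈ Q, and suppose there exists a subgradient g of ψ at y on Q (i.e. ψ(x) ≥ ψ(y) + g(x − y) for all x ∈ Q) such that (g + d′(y) − d′(z))(x − y) ≥ −δ̃ for all x ∈ Q (i.e. y is a δ̃-approximate minimizer of x ↦ ψ(x) + V(x,z) over Q in the sense of Definition 4). Then for all x ∈ Q: ψ(x) + V(x,z) ≥ ψ(y) + V(y,z) + V(x,y) − δ̃. -/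
section Bregman

variable {E : Type*} [AddCommGroup E] [Module ℝ E] [TopologicalSpace E]

def bregmanDiv (d : E → ℝ) (d' : E → E →L[ℝ] ℝ) (x y : E) : ℝ :=
  d x - d y - d' y (x - y)

theorem bregmanDiv_three_point (d : E → ℝ) (d' : E → E →L[ℝ] ℝ) (x y z : E) :
    bregmanDiv d d' x z =
      bregmanDiv d d' x y + bregmanDiv d d' y z + (d' y - d' z) (x - y) := by
  have hsplit : d' z (x - z) = d' z (x - y) + d' z (y - z) := by
    rw [← map_add, sub_add_sub_cancel]
  simp only [bregmanDiv, sub_apply, hsplit]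
  ring

end Bregman

theorem stmt3_general {E : Type*} [NormedAddCommGroup E] [NormedSpace ℝ E]
    (Q : Set E)
    (d : E → ℝ) (d' : E → (E →L[ℝ] ℝ))
    (V : E → E → ℝ) (hV : ∀ x y, V x y = d x - d y - d' y (x - y))
    (δt : ℝ)
    (ψ : E → ℝ)
    (z : E) (y : E)
    (g : E →L[ℝ] ℝ)
    (hsub : ∀ x ∈ Q, ψ y + g (x - y) ≤ ψ x)
    (happrox : ∀ x ∈ Q, -δt ≤ g (x - y) + (d' y) (x - y) - (d' z) (x - y)) :
    ∀ x ∈ Q, ψ y + V y z + V x y - δt ≤ ψ x + V x z := by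
  obtain rfl : V = bregmanDiv d d' := funext₂ hV
  intro x hx
  have hthree := bregmanDiv_three_point d d' x y z
  rw [sub_apply] at hthree
  linarith [hsub x hx, happrox x hx]

/-- If `y ∈ Q` is a `δ̃`-approximate minimizer (in the sense of
Definition 4) of `x ↦ ψ x + V x z` over `Q`, where `ψ` is convex and
`V x y = d x − d y − d′ y (x − y)` is the Bregman divergence, then
`ψ x + V x z ≥ ψ y + V y z + V x y − δ̃` for all `x ∈ Q`. -/
theorem stmt3 {E : Type*} [NormedAddCommGroup E] [NormedSpace ℝ E]
    (Q : Set E) (hQ : Convex ℝ Q)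
    (d : E → ℝ) (d' : E → (E →L[ℝ] ℝ)) (hd : ∀ x, HasFDerivAt d (d' x) x)
    (V : E → E → ℝ) (hV : ∀ x y, V x y = d x - d y - d' y (x - y))
    (δt : ℝ) (hδt : 0 ≤ δt)
    (ψ : E → ℝ) (hψ : ConvexOn ℝ Q ψ)
    (z : E) (y : E) (hy : y ∈ Q)
    (g : E →L[ℝ] ℝ)
    (hsub : ∀ x ∈ Q, ψ y + g (x - y) ≤ ψ x)
    (happrox : ∀ x ∈ Q, -δt ≤ g (x - y) + (d' y) (x - y) - (d' z) (x - y)) :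
    ∀ x ∈ Q, ψ y + V y z + V x y - δt ≤ ψ x + V x z :=
  stmt3_general Q d d' V hV δt ψ z y g hsub happrox
end

section
/- Let N ≥ 1, let x_0, x_1, …, x_N ∈ Q, let δ_0,…,δ_{N−1} ≥ 0, δ̃_0,…,δ̃_{N−1} ≥ 0, and let α_1,…,α_N > 0 satisfy α_{k+1} ≥ 1/(2L) for each k. Suppose for each k = 0,…,N−1 and every x ∈ Q: α_{k+1}·F(x_{k+1}) − α_{k+1}·F(x) ≤ V(x,x_k) − V(x,x_{k+1}) + δ̃_k + 2δ_k·α_{k+1}. Suppose F is convex on Q, x_* ∈ Q minimizes F on Q, V(x_*,x_0) ≤ R², and V(x,y) ≥ 0 for all x,y ∈ Q. Set A_N = Σ_{k=0}^{N−1} α_{k+1} and x̄_N = (1/A_N)·Σ_{k=0}^{N−1} α_{k+1}·x_{k+1}. Then F(x̄_N) − F(x_*) ≤ 2LR²/N + (2L/N)·Σ_{k=0}^{N−1} δ̃_k + (2/A_N)·Σ_{k=0}^{N−1} α_{k+1}·δ_k. -/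
/-!
Summing the one-step inequalities at `z = x_*` telescopes the divergence terms:
`∑ α_{k+1} (F x_{k+1} - F x_*) ≤ V(x_*, x_0) + ∑ δ̃_k + 2 ∑ α_{k+1} δ_k`, since `V(x_*, x_N) ≥ 0`.
By Jensen's inequality the left side dominates `A_N (F x̄_N - F x_*)`, and `α_{k+1} ≥ 1/(2L)`
gives `A_N ≥ N/(2L)`.
-/

open Finset

lemma sum_range_le_add_sum_of_le_sub_succ {a e v : ℕ → ℝ} {N : ℕ}
    (h : ∀ k < N, a k ≤ v k - v (k + 1) + e k) (hv : 0 ≤ v N) :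
    ∑ k ∈ range N, a k ≤ v 0 + ∑ k ∈ range N, e k :=
  calc ∑ k ∈ range N, a k ≤ ∑ k ∈ range N, (v k - v (k + 1) + e k) :=
        sum_le_sum fun k hk => h k (mem_range.mp hk)
    _ = v 0 - v N + ∑ k ∈ range N, e k := by rw [sum_add_distrib, sum_range_sub']
    _ ≤ v 0 + ∑ k ∈ range N, e k := by linarith

lemma ConvexOn.sum_mul_map_smul_sum_le {E ι : Type*} [AddCommGroup E] [Module ℝ E] {s : Set E}
    {f : E → ℝ} (hf : ConvexOn ℝ s f) {t : Finset ι} {w : ι → ℝ} {p : ι → E}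
    (hw : ∀ i ∈ t, 0 ≤ w i) (hpos : 0 < ∑ i ∈ t, w i) (hp : ∀ i ∈ t, p i ∈ s) :
    (∑ i ∈ t, w i) * f ((∑ i ∈ t, w i)⁻¹ • ∑ i ∈ t, w i • p i) ≤ ∑ i ∈ t, w i * f (p i) := by
  have h := hf.map_centerMass_le hw hpos hp
  rw [centerMass, centerMass, smul_eq_mul] at h
  calc (∑ i ∈ t, w i) * f ((∑ i ∈ t, w i)⁻¹ • ∑ i ∈ t, w i • p i)
      ≤ (∑ i ∈ t, w i) * ((∑ i ∈ t, w i)⁻¹ * ∑ i ∈ t, w i • (f ∘ p) i) := by gcongr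
    _ = ∑ i ∈ t, w i * f (p i) := by field_simp; rfl

theorem stmt6_general {E : Type*} [NormedAddCommGroup E] [NormedSpace ℝ E]
    (Q : Set E)
    (F : E → ℝ) (hF : ConvexOn ℝ Q F)
    (L R : ℝ) (hL : 0 < L)
    (V : E → E → ℝ) (hVpos : ∀ x ∈ Q, ∀ y ∈ Q, 0 ≤ V x y)
    (N : ℕ) (hN : 1 ≤ N)
    (x : ℕ → E) (hx : ∀ k ≤ N, x k ∈ Q)
    (δ δt α : ℕ → ℝ)
    (hδt : ∀ k < N, 0 ≤ δt k)
    (hαL : ∀ k < N, 1 / (2 * L) ≤ α (k + 1))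
    (hiter : ∀ k < N, ∀ z ∈ Q,
      α (k + 1) * F (x (k + 1)) - α (k + 1) * F z ≤
        V z (x k) - V z (x (k + 1)) + δt k + 2 * δ k * α (k + 1))
    (xstar : E) (hxstar : xstar ∈ Q)
    (hR2 : V xstar (x 0) ≤ R ^ 2)
    (A : ℝ) (hA : A = ∑ k ∈ Finset.range N, α (k + 1))
    (xbar : E) (hxbar : xbar = (1 / A) • ∑ k ∈ Finset.range N, α (k + 1) • x (k + 1)) :
    F xbar - F xstar ≤ 2 * L * R ^ 2 / N + (2 * L / N) * ∑ k ∈ Finset.range N, δt k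
      + (2 / A) * ∑ k ∈ Finset.range N, α (k + 1) * δ k := by
  set S := ∑ k ∈ range N, δt k
  set D := ∑ k ∈ range N, α (k + 1) * δ k
  have hNpos : (0 : ℝ) < N := by exact_mod_cast hN
  have hA_ge : N / (2 * L) ≤ A := by
    have h := card_nsmul_le_sum (range N) (fun k => α (k + 1)) _
      fun k hk => hαL k (mem_range.mp hk)
    rwa [card_range, nsmul_eq_mul, mul_one_div, ← hA] at h
  have hN2L : (0 : ℝ) < N / (2 * L) := by positivity
  have hApos : 0 < A := hN2L.trans_le hA_ge
  have hinvA : 1 / A ≤ 2 * L / N := by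
    simpa only [one_div_div] using one_div_le_one_div_of_le hN2L hA_ge
  have hregret : ∑ k ∈ range N, α (k + 1) * F (x (k + 1)) - A * F xstar ≤ R ^ 2 + S + 2 * D := by
    have h := sum_range_le_add_sum_of_le_sub_succ
      (a := fun k => α (k + 1) * F (x (k + 1)) - α (k + 1) * F xstar)
      (v := fun k => V xstar (x k)) (e := fun k => δt k + 2 * (α (k + 1) * δ k))
      (fun k hk => by linarith [hiter k hk xstar hxstar]) (hVpos _ hxstar _ (hx N le_rfl))
    rw [sum_sub_distrib, ← sum_mul, ← hA, sum_add_distrib, ← mul_sum] at h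
    linarith
  have hjensen : A * F xbar ≤ ∑ k ∈ range N, α (k + 1) * F (x (k + 1)) := by
    rw [hxbar, hA, one_div]
    have hα : ∀ k ∈ range N, 0 ≤ α (k + 1) := fun k hk =>
      (by positivity : (0 : ℝ) ≤ 1 / (2 * L)).trans (hαL k (mem_range.mp hk))
    exact hF.sum_mul_map_smul_sum_le hα (hA ▸ hApos) fun k hk => hx (k + 1) (mem_range.mp hk)
  have hS : 0 ≤ S := sum_nonneg fun k hk => hδt k (mem_range.mp hk)
  calc F xbar - F xstar ≤ (1 / A) * (R ^ 2 + S) + (2 / A) * D := by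
        rw [one_div, ← div_eq_inv_mul, ← mul_div_right_comm, ← add_div, le_div_iff₀ hApos]
        linarith
    _ ≤ (2 * L / N) * (R ^ 2 + S) + (2 / A) * D := by gcongr
    _ = 2 * L * R ^ 2 / N + (2 * L / N) * S + (2 / A) * D := by ring

/-- Theorem 1: Convergence of the gradient method with a
`(δ_k, L)`-model oracle and `δ̃_k`-inexact auxiliary minimization:
`F(x̄_N) − F(x_*) ≤ 2LR²/N + (2L/N)·Σ δ̃_k + (2/A_N)·Σ α_{k+1} δ_k`. -/
theorem stmt6 {E : Type*} [NormedAddCommGroup E] [NormedSpace ℝ E]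
    (Q : Set E) (hQ : Convex ℝ Q)
    (F : E → ℝ) (hF : ConvexOn ℝ Q F)
    (L R : ℝ) (hL : 0 < L) (hR : 0 < R)
    (V : E → E → ℝ) (hVpos : ∀ x ∈ Q, ∀ y ∈ Q, 0 ≤ V x y)
    (N : ℕ) (hN : 1 ≤ N)
    (x : ℕ → E) (hx : ∀ k ≤ N, x k ∈ Q)
    (δ δt α : ℕ → ℝ)
    (hδ : ∀ k < N, 0 ≤ δ k) (hδt : ∀ k < N, 0 ≤ δt k)
    (hαpos : ∀ k < N, 0 < α (k + 1)) (hαL : ∀ k < N, 1 / (2 * L) ≤ α (k + 1))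
    (hiter : ∀ k < N, ∀ z ∈ Q,
      α (k + 1) * F (x (k + 1)) - α (k + 1) * F z ≤
        V z (x k) - V z (x (k + 1)) + δt k + 2 * δ k * α (k + 1))
    (xstar : E) (hxstar : xstar ∈ Q) (hmin : ∀ z ∈ Q, F xstar ≤ F z)
    (hR2 : V xstar (x 0) ≤ R ^ 2)
    (A : ℝ) (hA : A = ∑ k ∈ Finset.range N, α (k + 1))
    (xbar : E) (hxbar : xbar = (1 / A) • ∑ k ∈ Finset.range N, α (k + 1) • x (k + 1)) :
    F xbar - F xstar ≤ 2 * L * R ^ 2 / N + (2 * L / N) * ∑ k ∈ Finset.range N, δt k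
      + (2 / A) * ∑ k ∈ Finset.range N, α (k + 1) * δ k :=
  stmt6_general Q F hF L R hL V hVpos N hN x hx δ δt α hδt hαL hiter xstar hxstar hR2 A hA xbar
    hxbar
end

section
/- Let L > 0 and let (α_k)_{k≥0}, (A_k)_{k≥0}, (L_k)_{k≥1} be real sequences with α_0 = 0, A_0 = 0, A_{k+1} = A_k + α_{k+1} for all k ≥ 0, 0 < L_k ≤ 2L for all k ≥ 1, and α_{k+1} = (1 + √(1 + 4·L_{k+1}·A_k))/(2·L_{k+1}) for all k ≥ 0 (the larger root of L_{k+1}·α² = A_k + α, so that A_{k+1} = L_{k+1}·α_{k+1}²). Then for every k ≥ 1: A_k ≥ (k+1)²/(8L). -/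
/-!
Since `α_{k+1}` solves `L_{k+1} α² = A_k + α`, we have `A_{k+1} = L_{k+1} α_{k+1}²`, and the root
formula gives `√A_{k+1} ≥ √A_k + 1 / (2 √L_{k+1}) ≥ √A_k + 1 / √(8L)`. As `A_1 = 1 / L_1 ≥ 1 / (2L)`,
i.e. `√A_1 ≥ 2 / √(8L)`, induction yields `√A_k ≥ (k + 1) / √(8L)`.
-/

lemma sqrt_add_one_div_two_sqrt_le_sqrt_add_root {a c : ℝ} (ha : 0 ≤ a) (hc : 0 < c) :
    √a + 1 / (2 * √c) ≤ √(a + (1 + √(1 + 4 * c * a)) / (2 * c)) := by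
  have hroot : 2 * √c * √a ≤ √(1 + 4 * c * a) := by
    rw [Real.le_sqrt (by positivity) (by positivity), mul_pow, mul_pow, Real.sq_sqrt hc.le,
      Real.sq_sqrt ha]
    linarith
  rw [Real.le_sqrt (by positivity) (by positivity)]
  calc (√a + 1 / (2 * √c)) ^ 2 = a + √a / √c + 1 / (4 * c) := by
        field_simp
        linear_combination 16 * c * √c ^ 2 * Real.sq_sqrt ha - 4 * Real.sq_sqrt hc.le
    _ ≤ a + √a / √c + 1 / (2 * c) := by gcongr; linarith
    _ = a + (1 + 2 * √c * √a) / (2 * c) := by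
        field_simp
        linear_combination -2 * √a * Real.sq_sqrt hc.le
    _ ≤ a + (1 + √(1 + 4 * c * a)) / (2 * c) := by gcongr

lemma one_div_sqrt_eight_mul_le {c L : ℝ} (hc : 0 < c) (hcL : c ≤ 2 * L) :
    1 / √(8 * L) ≤ 1 / (2 * √c) := by
  rw [show √(8 * L) = 2 * √(2 * L) by
    rw [show 8 * L = 2 ^ 2 * (2 * L) by ring, Real.sqrt_mul (by positivity),
      Real.sqrt_sq two_pos.le]]
  gcongr

theorem stmt7_general (L : ℝ) (hL : 0 < L)
    (α A Lc : ℕ → ℝ)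
    (hA0 : A 0 = 0)
    (hA : ∀ k, A (k + 1) = A k + α (k + 1))
    (hLc : ∀ k ≥ 1, 0 < Lc k ∧ Lc k ≤ 2 * L)
    (hroot : ∀ k, α (k + 1) =
      (1 + Real.sqrt (1 + 4 * Lc (k + 1) * A k)) / (2 * Lc (k + 1))) :
    ∀ k : ℕ, 1 ≤ k → ((k : ℝ) + 1) ^ 2 / (8 * L) ≤ A k := by
  have h8L : 0 < √(8 * L) := Real.sqrt_pos.2 (by positivity)
  have hLc_sqrt : ∀ k ≥ 1, 1 / √(8 * L) ≤ 1 / (2 * √(Lc k)) := fun k hk =>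
    one_div_sqrt_eight_mul_le (hLc k hk).1 (hLc k hk).2
  have hgrowth : ∀ k : ℕ, 1 ≤ k → ((k : ℝ) + 1) / √(8 * L) ≤ √(A k) := by
    refine Nat.le_induction ?_ (fun k hk ih => ?_)
    · have hA1 : A 1 = 1 / Lc 1 := by
        rw [hA 0, hroot 0, hA0]
        field_simp
        norm_num
      calc ((1 : ℕ) + 1 : ℝ) / √(8 * L) = 1 / √(8 * L) + 1 / √(8 * L) := by push_cast; ring
        _ ≤ 1 / (2 * √(Lc 1)) + 1 / (2 * √(Lc 1)) :=
          add_le_add (hLc_sqrt 1 le_rfl) (hLc_sqrt 1 le_rfl)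
        _ = √(A 1) := by
          rw [hA1, Real.sqrt_div' _ (hLc 1 le_rfl).1.le, Real.sqrt_one]
          ring
    · have hAk : 0 ≤ A k := (Real.sqrt_pos.1 (lt_of_lt_of_le (by positivity) ih)).le
      calc ((k + 1 : ℕ) + 1 : ℝ) / √(8 * L) = (k + 1) / √(8 * L) + 1 / √(8 * L) := by
            push_cast; ring
        _ ≤ √(A k) + 1 / (2 * √(Lc (k + 1))) := add_le_add ih (hLc_sqrt (k + 1) (by omega))
        _ ≤ √(A (k + 1)) := by
            rw [hA k, hroot k]
            exact sqrt_add_one_div_two_sqrt_le_sqrt_add_root hAk (hLc (k + 1) (by omega)).1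
  intro k hk
  have hA_pos : 0 < A k := Real.sqrt_pos.1 (lt_of_lt_of_le (by positivity) (hgrowth k hk))
  simpa only [div_pow, Real.sq_sqrt (by positivity : (0 : ℝ) ≤ 8 * L)] using
    (Real.le_sqrt (by positivity) hA_pos.le).1 (hgrowth k hk)

/-- Lemma 3: For the coefficient sequences of the fast gradient
method, with `α_0 = 0`, `A_0 = 0`, `A_{k+1} = A_k + α_{k+1}`, `0 < L_k ≤ 2L`,
and `α_{k+1}` the larger root of `L_{k+1} α² = A_k + α`, one has
`A_k ≥ (k+1)²/(8L)` for all `k ≥ 1`. -/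
theorem stmt7 (L : ℝ) (hL : 0 < L)
    (α A Lc : ℕ → ℝ)
    (hα0 : α 0 = 0) (hA0 : A 0 = 0)
    (hA : ∀ k, A (k + 1) = A k + α (k + 1))
    (hLc : ∀ k ≥ 1, 0 < Lc k ∧ Lc k ≤ 2 * L)
    (hroot : ∀ k, α (k + 1) =
      (1 + Real.sqrt (1 + 4 * Lc (k + 1) * A k)) / (2 * Lc (k + 1))) :
    ∀ k : ℕ, 1 ≤ k → ((k : ℝ) + 1) ^ 2 / (8 * L) ≤ A k :=
  stmt7_general L hL α A Lc hA0 hA hLc hroot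
end

section
/- Let α > 0, A_k ≥ 0, A_{k+1} = A_k + α with A_{k+1} = L₊·α² for some L₊ > 0; let u_k, u_{k+1}, x_k ∈ Q, y = (α·u_k + A_k·x_k)/A_{k+1} and x_{k+1} = (α·u_{k+1} + A_k·x_k)/A_{k+1}; let δ ≥ 0, δ̃ ≥ 0, F : Q → ℝ, F₀ ∈ ℝ, and ψ : E → ℝ convex on Q with: (i) F₀ + ψ(x) ≤ F(x) for all x ∈ Q (left model inequality at y); (ii) F(x_{k+1}) ≤ F₀ + ψ(x_{k+1}) + (L₊/2)‖x_{k+1} − y‖² + 2δ; (iii) V(x,z) ≥ (1/2)‖x − z‖² for all x, z ∈ Q; (iv) there exists a subgradient g of x ↦ α·ψ(x) at u_{k+1} on Q with (g + d′(u_{k+1}) − d′(u_k))(x − u_{k+1}) ≥ −δ̃ for all x ∈ Q (u_{k+1} is a δ̃-approximate minimizer of x ↦ V(x,u_k) + α·ψ(x) over Q in the sense of Definition 4). Then for all x ∈ Q: A_{k+1}·F(x_{k+1}) − A_k·F(x_k) + V(x,u_{k+1}) − V(x,u_k) ≤ α·F(x) + 2δ·A_{k+1} + δ̃. -/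
/-!
Three estimates are added up. The step condition, with `A_{k+1} = L₊ α²` and
`x_{k+1} - y = (α / A_{k+1}) (u_{k+1} - u_k)`, bounds the quadratic term by
`V(u_{k+1}, u_k) / A_{k+1}`; convexity of `ψ` splits `A_{k+1} ψ(x_{k+1})` along the
convex combination defining `x_{k+1}`; and the approximate optimality of `u_{k+1}`,
via the three-point identity for Bregman divergences, bounds
`α ψ(u_{k+1}) + V(u_{k+1}, u_k)` by `α ψ(x) + V(x, u_k) - V(x, u_{k+1}) + δ̃`.
The left model inequality at `x_k` and at `x` then closes the estimate.
-/

section Bregman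

variable {E : Type*} [AddCommGroup E] [Module ℝ E] [TopologicalSpace E]

theorem bregman_three_point {d : E → ℝ} {d' : E → E →L[ℝ] ℝ} {V : E → E → ℝ}
    (hV : ∀ x y, V x y = d x - d y - d' y (x - y)) (x y z : E) :
    V x z - V x y - V y z = d' y (x - y) - d' z (x - y) := by
  have hsplit : x - z = (x - y) + (y - z) := by abel
  rw [hV, hV, hV, hsplit, map_add]
  ring

theorem bregman_approx_prox_le {Q : Set E} {d : E → ℝ} {d' : E → E →L[ℝ] ℝ}
    {V : E → E → ℝ} (hV : ∀ x y, V x y = d x - d y - d' y (x - y))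
    {φ : E → ℝ} {g : E →L[ℝ] ℝ} {u v : E} {ε : ℝ}
    (hsub : ∀ x ∈ Q, φ v + g (x - v) ≤ φ x)
    (happrox : ∀ x ∈ Q, -ε ≤ g (x - v) + d' v (x - v) - d' u (x - v))
    {x : E} (hx : x ∈ Q) :
    φ v + V v u + V x v ≤ φ x + V x u + ε := by
  linarith [hsub x hx, happrox x hx, bregman_three_point hV x v u]

end Bregman

theorem ConvexOn.add_mul_map_inv_smul_add_le {E : Type*} [AddCommGroup E] [Module ℝ E]
    {Q : Set E} {ψ : E → ℝ} (hψ : ConvexOn ℝ Q ψ) {x y : E} (hx : x ∈ Q) (hy : y ∈ Q)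
    {a b : ℝ} (ha : 0 ≤ a) (hb : 0 ≤ b) (hab : 0 < a + b) :
    (a + b) * ψ ((a + b)⁻¹ • (a • x + b • y)) ≤ a * ψ x + b * ψ y := by
  have hcomb : (a + b)⁻¹ • (a • x + b • y) = (a / (a + b)) • x + (b / (a + b)) • y := by
    rw [smul_add, smul_smul, smul_smul, div_eq_inv_mul, div_eq_inv_mul]
  have hweights : a / (a + b) + b / (a + b) = 1 := by field_simp
  have h := hψ.2 hx hy (div_nonneg ha hab.le) (div_nonneg hb hab.le) hweights
  rw [hcomb]
  calc (a + b) * ψ ((a / (a + b)) • x + (b / (a + b)) • y)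
      ≤ (a + b) * (a / (a + b) * ψ x + b / (a + b) * ψ y) := by gcongr; exact h
    _ = a * ψ x + b * ψ y := by field_simp

theorem norm_inv_smul_sub_sq_of_eq_mul_sq {E : Type*} [NormedAddCommGroup E]
    [NormedSpace ℝ E] {A L α : ℝ} (hα : α ≠ 0) (hA : A = L * α ^ 2) (u v w : E) :
    L / 2 * ‖A⁻¹ • (α • u + w) - A⁻¹ • (α • v + w)‖ ^ 2 = A⁻¹ * (1 / 2 * ‖u - v‖ ^ 2) := by
  rw [← smul_sub, add_sub_add_right_eq_sub, ← smul_sub, smul_smul, norm_smul,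
    Real.norm_eq_abs, mul_pow, sq_abs, hA]
  by_cases hL : L = 0
  · simp [hL]
  · field_simp

theorem stmt8_general {E : Type*} [NormedAddCommGroup E] [NormedSpace ℝ E]
    (Q : Set E)
    (d : E → ℝ) (d' : E → (E →L[ℝ] ℝ))
    (V : E → E → ℝ) (hV : ∀ x y, V x y = d x - d y - d' y (x - y))
    (α Ak Ak1 Lp δ δt : ℝ) (hα : 0 < α) (hAk : 0 ≤ Ak)
    (hrec : Ak1 = Ak + α) (hAL : Ak1 = Lp * α ^ 2)
    (uk uk1 xk : E) (huk : uk ∈ Q) (huk1 : uk1 ∈ Q) (hxk : xk ∈ Q)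
    (y : E) (hy : y = Ak1⁻¹ • (α • uk + Ak • xk))
    (xk1 : E) (hxk1 : xk1 = Ak1⁻¹ • (α • uk1 + Ak • xk))
    (F : E → ℝ) (F₀ : ℝ) (ψ : E → ℝ) (hψ : ConvexOn ℝ Q ψ)
    (hleft : ∀ x ∈ Q, F₀ + ψ x ≤ F x)
    (hstep : F xk1 ≤ F₀ + ψ xk1 + Lp / 2 * ‖xk1 - y‖ ^ 2 + 2 * δ)
    (hVlow : ∀ x ∈ Q, ∀ z ∈ Q, 1/2 * ‖x - z‖ ^ 2 ≤ V x z)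
    (g : E →L[ℝ] ℝ)
    (hsub : ∀ x ∈ Q, α * ψ uk1 + g (x - uk1) ≤ α * ψ x)
    (happrox : ∀ x ∈ Q, -δt ≤ g (x - uk1) + d' uk1 (x - uk1) - d' uk (x - uk1)) :
    ∀ x ∈ Q, Ak1 * F xk1 - Ak * F xk + V x uk1 - V x uk ≤
      α * F x + 2 * δ * Ak1 + δt := by
  intro x hx
  have hA : 0 < Ak1 := by linarith
  have hquad : Lp / 2 * ‖xk1 - y‖ ^ 2 ≤ Ak1⁻¹ * V uk1 uk := by
    rw [hxk1, hy, norm_inv_smul_sub_sq_of_eq_mul_sq hα.ne' hAL]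
    exact mul_le_mul_of_nonneg_left (hVlow uk1 huk1 uk huk) (inv_nonneg.mpr hA.le)
  have hdescent : Ak1 * F xk1 ≤ Ak1 * (F₀ + ψ xk1) + V uk1 uk + 2 * δ * Ak1 := by
    calc Ak1 * F xk1 ≤ Ak1 * (F₀ + ψ xk1 + Ak1⁻¹ * V uk1 uk + 2 * δ) := by gcongr; linarith
      _ = Ak1 * (F₀ + ψ xk1) + V uk1 uk + 2 * δ * Ak1 := by field_simp
  have hconv : Ak1 * ψ xk1 ≤ α * ψ uk1 + Ak * ψ xk := by
    have h := hψ.add_mul_map_inv_smul_add_le huk1 hxk hα.le hAk (by linarith)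
    rwa [add_comm α Ak, ← hrec, ← hxk1] at h
  have hprox := bregman_approx_prox_le (φ := fun z ↦ α * ψ z) hV hsub happrox hx
  have hmodel_xk := mul_le_mul_of_nonneg_left (hleft xk hxk) hAk
  have hmodel_x := mul_le_mul_of_nonneg_left (hleft x hx) hα.le
  rw [hrec] at hdescent hconv ⊢
  linarith

/-- Lemma 4: The per-iteration inequality for the fast gradient
method with a `(δ, L)`-model oracle: with `A_{k+1} = A_k + α = L₊ α²`,
`y = (α u_k + A_k x_k)/A_{k+1}`, `x_{k+1} = (α u_{k+1} + A_k x_k)/A_{k+1}`,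
the left model inequality, the accepted step condition, the 1-strong-convexity
lower bound on `V`, and `δ̃`-approximate optimality of `u_{k+1}` for
`x ↦ V(x, u_k) + α ψ(x)`, one has, for all `x ∈ Q`,
`A_{k+1} F(x_{k+1}) − A_k F(x_k) + V(x, u_{k+1}) − V(x, u_k) ≤ α F(x) + 2δ A_{k+1} + δ̃`. -/
theorem stmt8 {E : Type*} [NormedAddCommGroup E] [NormedSpace ℝ E]
    (Q : Set E) (hQ : Convex ℝ Q)
    (d : E → ℝ) (d' : E → (E →L[ℝ] ℝ)) (hd : ∀ x, HasFDerivAt d (d' x) x)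
    (V : E → E → ℝ) (hV : ∀ x y, V x y = d x - d y - d' y (x - y))
    (α Ak Ak1 Lp δ δt : ℝ) (hα : 0 < α) (hAk : 0 ≤ Ak) (hLp : 0 < Lp)
    (hδ : 0 ≤ δ) (hδt : 0 ≤ δt)
    (hrec : Ak1 = Ak + α) (hAL : Ak1 = Lp * α ^ 2)
    (uk uk1 xk : E) (huk : uk ∈ Q) (huk1 : uk1 ∈ Q) (hxk : xk ∈ Q)
    (y : E) (hy : y = Ak1⁻¹ • (α • uk + Ak • xk))
    (xk1 : E) (hxk1 : xk1 = Ak1⁻¹ • (α • uk1 + Ak • xk))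
    (F : E → ℝ) (F₀ : ℝ) (ψ : E → ℝ) (hψ : ConvexOn ℝ Q ψ)
    (hleft : ∀ x ∈ Q, F₀ + ψ x ≤ F x)
    (hstep : F xk1 ≤ F₀ + ψ xk1 + Lp / 2 * ‖xk1 - y‖ ^ 2 + 2 * δ)
    (hVlow : ∀ x ∈ Q, ∀ z ∈ Q, 1/2 * ‖x - z‖ ^ 2 ≤ V x z)
    (g : E →L[ℝ] ℝ)
    (hsub : ∀ x ∈ Q, α * ψ uk1 + g (x - uk1) ≤ α * ψ x)
    (happrox : ∀ x ∈ Q, -δt ≤ g (x - uk1) + d' uk1 (x - uk1) - d' uk (x - uk1)) :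
    ∀ x ∈ Q, Ak1 * F xk1 - Ak * F xk + V x uk1 - V x uk ≤
      α * F x + 2 * δ * Ak1 + δt :=
  stmt8_general Q d d' V hV α Ak Ak1 Lp δ δt hα hAk hrec hAL uk uk1 xk huk huk1 hxk y hy xk1 hxk1 F
    F₀ ψ hψ hleft hstep hVlow g hsub happrox
end

section
/- Let N ≥ 1, let x_0,…,x_N ∈ Q and u_0 = x_0, u_1, …, u_N ∈ Q, let δ_0,…,δ_{N−1} ≥ 0, δ̃_0,…,δ̃_{N−1} ≥ 0, and let 0 = A_0 < A_1 < … < A_N with A_{k+1} = A_k + α_{k+1}. Suppose for each k = 0,…,N−1 and every x ∈ Q: A_{k+1}·F(x_{k+1}) − A_k·F(x_k) + V(x,u_{k+1}) − V(x,u_k) ≤ α_{k+1}·F(x) + 2δ_k·A_{k+1} + δ̃_k. Suppose x_* ∈ Q minimizes F on Q, V(x_*,x_0) ≤ R², V(x,y) ≥ 0 for all x,y ∈ Q, and A_N ≥ (N+1)²/(8L). Then F(x_N) − F(x_*) ≤ 8LR²/(N+1)² + (2/A_N)·Σ_{k=0}^{N−1} δ_k·A_{k+1} + 8L·(Σ_{k=0}^{N−1}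 δ̃_k)/(N+1)². -/
/-!
Evaluating the one-step estimate at `z = x_*` and summing over `k` telescopes the left-hand
side, since `α_{k+1} = A_{k+1} - A_k` and `A_0 = 0`. Dropping `V(x_*, u_N) ≥ 0` leaves
`A_N (F(x_N) - F(x_*)) ≤ R² + 2 Σ δ_k A_{k+1} + Σ δ̃_k`, and `1 / A_N ≤ 8L / (N+1)²` gives the rate.
-/

open Finset

theorem sub_le_sum_of_forall_succ_sub_le {a b : ℕ → ℝ} {N : ℕ}
    (h : ∀ k < N, a (k + 1) - a k ≤ b k) : a N - a 0 ≤ ∑ k ∈ range N, b k := by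
  rw [← sum_range_sub]
  exact sum_le_sum fun k hk => h k (mem_range.mp hk)

theorem mul_sub_le_of_forall_step_le {X : Type*} {F : X → ℝ} {V : X → X → ℝ} {N : ℕ}
    {x u : ℕ → X} {δ δt A α : ℕ → ℝ} {z : X} (hA0 : A 0 = 0)
    (hArec : ∀ k < N, A (k + 1) = A k + α (k + 1))
    (hstep : ∀ k < N,
      A (k + 1) * F (x (k + 1)) - A k * F (x k) + V z (u (k + 1)) - V z (u k) ≤
        α (k + 1) * F z + 2 * δ k * A (k + 1) + δt k)
    (hVN : 0 ≤ V z (u N)) :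
    A N * (F (x N) - F z) ≤
      V z (u 0) + 2 * ∑ k ∈ range N, δ k * A (k + 1) + ∑ k ∈ range N, δt k := by
  have htelescope := sub_le_sum_of_forall_succ_sub_le
    (a := fun k => A k * (F (x k) - F z) + V z (u k))
    (b := fun k => 2 * δ k * A (k + 1) + δt k) (N := N) fun k hk => by
      have := hstep k hk
      rw [hArec k hk] at this ⊢
      linarith
  simp only [hA0, zero_mul, zero_add, sum_add_distrib, mul_sum, mul_assoc] at htelescope ⊢
  linarith

theorem stmt9_general {E : Type*}
    (Q : Set E)
    (F : E → ℝ) (L R : ℝ) (hL : 0 < L)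
    (V : E → E → ℝ) (hVpos : ∀ x ∈ Q, ∀ y ∈ Q, 0 ≤ V x y)
    (N : ℕ)
    (x u : ℕ → E) (hu : ∀ k ≤ N, u k ∈ Q)
    (hu0 : u 0 = x 0)
    (δ δt : ℕ → ℝ) (hδt : ∀ k < N, 0 ≤ δt k)
    (A α : ℕ → ℝ) (hA0 : A 0 = 0)
    (hArec : ∀ k < N, A (k + 1) = A k + α (k + 1))
    (hiter : ∀ k < N, ∀ z ∈ Q,
      A (k + 1) * F (x (k + 1)) - A k * F (x k) + V z (u (k + 1)) - V z (u k) ≤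
        α (k + 1) * F z + 2 * δ k * A (k + 1) + δt k)
    (xstar : E) (hxstar : xstar ∈ Q)
    (hR2 : V xstar (x 0) ≤ R ^ 2)
    (hAN : ((N : ℝ) + 1) ^ 2 / (8 * L) ≤ A N) :
    F (x N) - F xstar ≤ 8 * L * R ^ 2 / ((N : ℝ) + 1) ^ 2
      + (2 / A N) * ∑ k ∈ Finset.range N, δ k * A (k + 1)
      + 8 * L * (∑ k ∈ Finset.range N, δt k) / ((N : ℝ) + 1) ^ 2 := by
  set S := ∑ k ∈ range N, δ k * A (k + 1)
  set T := ∑ k ∈ range N, δt k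
  have hT : 0 ≤ T := sum_nonneg fun k hk => hδt k (mem_range.mp hk)
  have hAN_pos : 0 < A N := lt_of_lt_of_le (by positivity) hAN
  have hinv : 1 / A N ≤ 8 * L / ((N : ℝ) + 1) ^ 2 := by
    simpa only [one_div_div] using one_div_le_one_div_of_le (by positivity) hAN
  have hmain : A N * (F (x N) - F xstar) ≤ R ^ 2 + 2 * S + T := by
    have := mul_sub_le_of_forall_step_le hA0 hArec (fun k hk => hiter k hk xstar hxstar)
      (hVpos _ hxstar _ (hu N le_rfl))
    rw [hu0] at this
    linarith
  calc F (x N) - F xstar ≤ (R ^ 2 + 2 * S + T) / A N := by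
        rw [le_div_iff₀ hAN_pos, mul_comm]; exact hmain
    _ = R ^ 2 * (1 / A N) + (2 / A N) * S + T * (1 / A N) := by ring
    _ ≤ R ^ 2 * (8 * L / ((N : ℝ) + 1) ^ 2) + (2 / A N) * S
          + T * (8 * L / ((N : ℝ) + 1) ^ 2) := by gcongr
    _ = 8 * L * R ^ 2 / ((N : ℝ) + 1) ^ 2 + (2 / A N) * S
          + 8 * L * T / ((N : ℝ) + 1) ^ 2 := by ring

/-- Theorem 2: Convergence of the fast gradient method with a
`(δ_k, L)`-model oracle and `δ̃_k`-inexact auxiliary minimization: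
`F(x_N) − F(x_*) ≤ 8LR²/(N+1)² + (2/A_N)·Σ δ_k A_{k+1} + 8L·(Σ δ̃_k)/(N+1)²`. -/
theorem stmt9 {E : Type*} [NormedAddCommGroup E] [NormedSpace ℝ E]
    (Q : Set E) (hQ : Convex ℝ Q)
    (F : E → ℝ) (L R : ℝ) (hL : 0 < L) (hR : 0 < R)
    (V : E → E → ℝ) (hVpos : ∀ x ∈ Q, ∀ y ∈ Q, 0 ≤ V x y)
    (N : ℕ) (hN : 1 ≤ N)
    (x u : ℕ → E) (hx : ∀ k ≤ N, x k ∈ Q) (hu : ∀ k ≤ N, u k ∈ Q)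
    (hu0 : u 0 = x 0)
    (δ δt : ℕ → ℝ) (hδ : ∀ k < N, 0 ≤ δ k) (hδt : ∀ k < N, 0 ≤ δt k)
    (A α : ℕ → ℝ) (hA0 : A 0 = 0)
    (hAmono : ∀ k < N, A k < A (k + 1))
    (hArec : ∀ k < N, A (k + 1) = A k + α (k + 1))
    (hiter : ∀ k < N, ∀ z ∈ Q,
      A (k + 1) * F (x (k + 1)) - A k * F (x k) + V z (u (k + 1)) - V z (u k) ≤
        α (k + 1) * F z + 2 * δ k * A (k + 1) + δt k)
    (xstar : E) (hxstar : xstar ∈ Q) (hmin : ∀ z ∈ Q, F xstar ≤ F z)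
    (hR2 : V xstar (x 0) ≤ R ^ 2)
    (hAN : ((N : ℝ) + 1) ^ 2 / (8 * L) ≤ A N) :
    F (x N) - F xstar ≤ 8 * L * R ^ 2 / ((N : ℝ) + 1) ^ 2
      + (2 / A N) * ∑ k ∈ Finset.range N, δ k * A (k + 1)
      + 8 * L * (∑ k ∈ Finset.range N, δt k) / ((N : ℝ) + 1) ^ 2 :=
  stmt9_general Q F L R hL V hVpos N x u hu hu0 δ δt hδt A α hA0 hArec hiter xstar hxstar hR2 hAN
end

section
/- Let N ≥ 1, δ ≥ 0, δ̃ ≥ 0, let x_0,…,x_N ∈ Q and α_1,…,α_N > 0 with α_{k+1} ≥ 1/(2L), and suppose for each k = 0,…,N−1 and every x ∈ Q: α_{k+1}·F(x_{k+1}) − α_{k+1}·F(x) ≤ V(x,x_k) − V(x,x_{k+1}) + δ̃ + 2δ·α_{k+1}. Suppose F is convex on Q, x_* ∈ Q minimizes F on Q, V(x_*,x_0) ≤ R², and V ≥ 0. Then with A_N = Σ_{k=0}^{N−1} α_{k+1} and x̄_N = (1/A_N)·Σ_{k=0}^{N−1} α_{k+1}·x_{k+1}: F(x̄_N) − F(x_*)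 ≤ 2LR²/N + 2L·δ̃ + 2δ. -/
/-! Summing the one-step inequalities at `z = x_*` telescopes the divergences, so the
weighted regret `∑ α_{k+1} (F x_{k+1} - F x_*)` is at most `V(x_*, x_0) + N δ̃ + 2δ A_N`.
By Jensen's inequality the gap at the weighted average `x̄_N` is at most this regret divided
by `A_N`, and `A_N ≥ N / (2L)` turns that into the stated bound. -/

open Finset

theorem ConvexOn.map_centerMass_sub_le {E ι : Type*} [AddCommGroup E] [Module ℝ E]
    {Q : Set E} {F : E → ℝ} (hF : ConvexOn ℝ Q F) {t : Finset ι} {w : ι → ℝ} {p : ι → E}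
    (hw : ∀ i ∈ t, 0 ≤ w i) (hw_sum : 0 < ∑ i ∈ t, w i) (hp : ∀ i ∈ t, p i ∈ Q) (c : ℝ) :
    F (t.centerMass w p) - c ≤ (∑ i ∈ t, w i * (F (p i) - c)) / ∑ i ∈ t, w i := by
  have hjensen := hF.map_centerMass_le hw hw_sum hp
  simp only [centerMass, Function.comp_apply, smul_eq_mul] at hjensen ⊢
  rw [le_inv_mul_iff₀ hw_sum] at hjensen
  rw [le_div_iff₀ hw_sum]
  simp only [mul_sub, sum_sub_distrib, ← sum_mul]
  linarith

theorem sum_mul_sub_le_of_step_le {E : Type*} (F : E → ℝ) (V : E → E → ℝ) (x : ℕ → E)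
    (α : ℕ → ℝ) (N : ℕ) (δ δt : ℝ) (z : E) (hVN : 0 ≤ V z (x N))
    (hstep : ∀ k < N, α (k + 1) * F (x (k + 1)) - α (k + 1) * F z ≤
      V z (x k) - V z (x (k + 1)) + δt + 2 * δ * α (k + 1)) :
    ∑ k ∈ range N, α (k + 1) * (F (x (k + 1)) - F z) ≤
      V z (x 0) + N * δt + 2 * δ * ∑ k ∈ range N, α (k + 1) := by
  have htelescope : ∑ k ∈ range N, (V z (x k) - V z (x (k + 1))) = V z (x 0) - V z (x N) :=
    sum_range_sub' (fun k ↦ V z (x k)) N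
  calc ∑ k ∈ range N, α (k + 1) * (F (x (k + 1)) - F z)
      ≤ ∑ k ∈ range N, (V z (x k) - V z (x (k + 1)) + δt + 2 * δ * α (k + 1)) :=
        sum_le_sum fun k hk ↦ (mul_sub _ _ _).trans_le (hstep k (mem_range.mp hk))
    _ = V z (x 0) - V z (x N) + N * δt + 2 * δ * ∑ k ∈ range N, α (k + 1) := by
        rw [sum_add_distrib, sum_add_distrib, htelescope, sum_const, card_range, nsmul_eq_mul,
          mul_sum]
    _ ≤ V z (x 0) + N * δt + 2 * δ * ∑ k ∈ range N, α (k + 1) := by linarith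

theorem stmt10_general {E : Type*} [NormedAddCommGroup E] [NormedSpace ℝ E]
    (Q : Set E)
    (F : E → ℝ) (hF : ConvexOn ℝ Q F)
    (L R : ℝ) (hL : 0 < L)
    (V : E → E → ℝ) (hVpos : ∀ x ∈ Q, ∀ y ∈ Q, 0 ≤ V x y)
    (N : ℕ) (hN : 1 ≤ N) (δ δt : ℝ) (hδt : 0 ≤ δt)
    (x : ℕ → E) (hx : ∀ k ≤ N, x k ∈ Q)
    (α : ℕ → ℝ)
    (hαL : ∀ k < N, 1 / (2 * L) ≤ α (k + 1))
    (hiter : ∀ k < N, ∀ z ∈ Q,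
      α (k + 1) * F (x (k + 1)) - α (k + 1) * F z ≤
        V z (x k) - V z (x (k + 1)) + δt + 2 * δ * α (k + 1))
    (xstar : E) (hxstar : xstar ∈ Q)
    (hR2 : V xstar (x 0) ≤ R ^ 2)
    (A : ℝ) (hA : A = ∑ k ∈ Finset.range N, α (k + 1))
    (xbar : E) (hxbar : xbar = (1 / A) • ∑ k ∈ Finset.range N, α (k + 1) • x (k + 1)) :
    F xbar - F xstar ≤ 2 * L * R ^ 2 / N + 2 * L * δt + 2 * δ := by
  have hN₀ : (0 : ℝ) < N := by exact_mod_cast hN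
  have hα : ∀ k ∈ range N, 0 ≤ α (k + 1) := fun k hk ↦
    (one_div_pos.mpr (by positivity)).le.trans (hαL k (mem_range.mp hk))
  have hA_ge : N / (2 * L) ≤ A := by
    have := card_nsmul_le_sum (range N) _ _ fun k hk ↦ hαL k (mem_range.mp hk)
    rwa [card_range, nsmul_eq_mul, mul_one_div, ← hA] at this
  have hA₀ : 0 < A := (by positivity : (0 : ℝ) < N / (2 * L)).trans_le hA_ge
  have hxbar_eq : xbar = (range N).centerMass (fun k ↦ α (k + 1)) (fun k ↦ x (k + 1)) := by
    rw [hxbar, centerMass, ← hA, one_div]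
  have hjensen := hF.map_centerMass_sub_le hα (hA ▸ hA₀)
    (fun k hk ↦ hx (k + 1) (mem_range.mp hk)) (F xstar)
  have hregret := sum_mul_sub_le_of_step_le F V x α N δ δt xstar
    (hVpos _ hxstar _ (hx N le_rfl)) fun k hk ↦ hiter k hk xstar hxstar
  rw [← hA] at hjensen hregret
  calc F xbar - F xstar ≤ (R ^ 2 + N * δt + 2 * δ * A) / A := by
        rw [hxbar_eq]
        exact hjensen.trans (div_le_div_of_nonneg_right (by linarith) hA₀.le)
    _ = (R ^ 2 + N * δt) / A + 2 * δ := by field_simp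
    _ ≤ (R ^ 2 + N * δt) / (N / (2 * L)) + 2 * δ := by gcongr
    _ = 2 * L * R ^ 2 / N + 2 * L * δt + 2 * δ := by field_simp

/-- The gradient-method bound with constant oracle error `δ` per
iteration and constant inexactness `δ̃` of the auxiliary subproblem:
`F(x̄_N) − F(x_*) ≤ 2LR²/N + 2Lδ̃ + 2δ`. -/
theorem stmt10 {E : Type*} [NormedAddCommGroup E] [NormedSpace ℝ E]
    (Q : Set E) (hQ : Convex ℝ Q)
    (F : E → ℝ) (hF : ConvexOn ℝ Q F)
    (L R : ℝ) (hL : 0 < L) (hR : 0 < R)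
    (V : E → E → ℝ) (hVpos : ∀ x ∈ Q, ∀ y ∈ Q, 0 ≤ V x y)
    (N : ℕ) (hN : 1 ≤ N) (δ δt : ℝ) (hδ : 0 ≤ δ) (hδt : 0 ≤ δt)
    (x : ℕ → E) (hx : ∀ k ≤ N, x k ∈ Q)
    (α : ℕ → ℝ)
    (hαpos : ∀ k < N, 0 < α (k + 1)) (hαL : ∀ k < N, 1 / (2 * L) ≤ α (k + 1))
    (hiter : ∀ k < N, ∀ z ∈ Q,
      α (k + 1) * F (x (k + 1)) - α (k + 1) * F z ≤
        V z (x k) - V z (x (k + 1)) + δt + 2 * δ * α (k + 1))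
    (xstar : E) (hxstar : xstar ∈ Q) (hmin : ∀ z ∈ Q, F xstar ≤ F z)
    (hR2 : V xstar (x 0) ≤ R ^ 2)
    (A : ℝ) (hA : A = ∑ k ∈ Finset.range N, α (k + 1))
    (xbar : E) (hxbar : xbar = (1 / A) • ∑ k ∈ Finset.range N, α (k + 1) • x (k + 1)) :
    F xbar - F xstar ≤ 2 * L * R ^ 2 / N + 2 * L * δt + 2 * δ :=
  stmt10_general Q F hF L R hL V hVpos N hN δ δt hδt x hx α hαL hiter xstar hxstar hR2 A hA xbar
    hxbar
end

section
/- Let N ≥ 1, δ ≥ 0, δ̃ ≥ 0, let x_0,…,x_N ∈ Q and u_0 = x_0, u_1,…,u_N ∈ Q, and let 0 = A_0 < A_1 < … < A_N with A_{k+1} = A_k + α_{k+1} and A_N ≥ (N+1)²/(8L). Suppose for each k = 0,…,N−1 and every x ∈ Q: A_{k+1}·F(x_{k+1}) − A_k·F(x_k) + V(x,u_{k+1}) − V(x,u_k) ≤ α_{k+1}·F(x) + 2δ·A_{k+1} + δ̃. Suppose x_* ∈ Q minimizes F on Q, V(x_*,x_0) ≤ R², and V ≥ 0. Then F(x_N)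 − F(x_*) ≤ 8LR²/(N+1)² + 8L·δ̃/(N+1) + 2N·δ. -/
/-!
The potential `Φ k = A k * (F (x k) - F x⋆) + V x⋆ (u k)` grows by at most
`2 δ A (k+1) + δ̃ ≤ 2 δ A N + δ̃` per step: this is the step inequality at `z = x⋆`, since
`α (k+1) = A (k+1) - A k`, and `A` increases. Telescoping from `Φ 0 = V x⋆ x₀ ≤ R²` and `V ≥ 0`
gives `A N (F (x N) - F x⋆) ≤ R² + N (2 δ A N + δ̃)`; dividing by `A N ≥ (N+1)²/(8L)` yields
the bound.
-/

open Finset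

lemma sub_le_sum_of_sub_succ_le {M : Type*} [AddCommGroup M] [PartialOrder M]
    [IsOrderedAddMonoid M] {Φ b : ℕ → M} {n : ℕ} (h : ∀ k < n, Φ (k + 1) - Φ k ≤ b k) :
    Φ n - Φ 0 ≤ ∑ k ∈ range n, b k := by
  rw [← sum_range_sub]
  exact sum_le_sum fun k hk ↦ h k (mem_range.mp hk)

lemma monotoneOn_Iic_of_le_succ {β : Type*} [Preorder β] {f : ℕ → β} {n : ℕ}
    (hf : ∀ k < n, f k ≤ f (k + 1)) :
    MonotoneOn f (Set.Iic n) :=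
  monotoneOn_of_le_succ Set.ordConnected_Iic fun k _ _ hk ↦ by
    rw [Order.succ_eq_add_one] at hk ⊢
    exact hf k (Nat.lt_of_succ_le hk)

lemma le_rate_of_mul_le {L A g R δ δt : ℝ} {N : ℕ} (hL : 0 < L) (hδt : 0 ≤ δt)
    (hA : ((N : ℝ) + 1) ^ 2 / (8 * L) ≤ A) (h : A * g ≤ R ^ 2 + N * (2 * δ * A + δt)) :
    g ≤ 8 * L * R ^ 2 / ((N : ℝ) + 1) ^ 2 + 8 * L * δt / ((N : ℝ) + 1) + 2 * N * δ := by
  have hApos : 0 < A := lt_of_lt_of_le (by positivity) hA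
  have hinv : 1 / A ≤ 8 * L / ((N : ℝ) + 1) ^ 2 := by
    rw [div_le_div_iff₀ hApos (by positivity)]
    rw [div_le_iff₀ (by positivity)] at hA
    linarith
  have hg : g ≤ R ^ 2 * (1 / A) + N * δt * (1 / A) + 2 * N * δ := by
    calc g = A * g / A := by field_simp
      _ ≤ (R ^ 2 + N * (2 * δ * A + δt)) / A := by gcongr
      _ = _ := by field_simp; ring
  have hR : R ^ 2 * (1 / A) ≤ 8 * L * R ^ 2 / ((N : ℝ) + 1) ^ 2 := by
    calc R ^ 2 * (1 / A) ≤ R ^ 2 * (8 * L / ((N : ℝ) + 1) ^ 2) := by gcongr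
      _ = _ := by ring
  have hδtA : N * δt * (1 / A) ≤ 8 * L * δt / ((N : ℝ) + 1) := by
    calc N * δt * (1 / A) ≤ N * δt * (8 * L / ((N : ℝ) + 1) ^ 2) := by gcongr
      _ = N / ((N : ℝ) + 1) * (8 * L * δt / ((N : ℝ) + 1)) := by field_simp
      _ ≤ 1 * (8 * L * δt / ((N : ℝ) + 1)) := by
        gcongr
        rw [div_le_one (by positivity)]
        linarith
      _ = _ := one_mul _
  linarith

theorem stmt11_general {E : Type*} [NormedAddCommGroup E] [NormedSpace ℝ E]
    (Q : Set E)
    (F : E → ℝ) (L R : ℝ) (hL : 0 < L)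
    (V : E → E → ℝ) (hVpos : ∀ x ∈ Q, ∀ y ∈ Q, 0 ≤ V x y)
    (N : ℕ) (δ δt : ℝ) (hδ : 0 ≤ δ) (hδt : 0 ≤ δt)
    (x u : ℕ → E) (hu : ∀ k ≤ N, u k ∈ Q)
    (hu0 : u 0 = x 0)
    (A α : ℕ → ℝ) (hA0 : A 0 = 0)
    (hAmono : ∀ k < N, A k < A (k + 1))
    (hArec : ∀ k < N, A (k + 1) = A k + α (k + 1))
    (hAN : ((N : ℝ) + 1) ^ 2 / (8 * L) ≤ A N)
    (hiter : ∀ k < N, ∀ z ∈ Q,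
      A (k + 1) * F (x (k + 1)) - A k * F (x k) + V z (u (k + 1)) - V z (u k) ≤
        α (k + 1) * F z + 2 * δ * A (k + 1) + δt)
    (xstar : E) (hxstar : xstar ∈ Q)
    (hR2 : V xstar (x 0) ≤ R ^ 2) :
    F (x N) - F xstar ≤ 8 * L * R ^ 2 / ((N : ℝ) + 1) ^ 2
      + 8 * L * δt / ((N : ℝ) + 1) + 2 * N * δ := by
  set Φ : ℕ → ℝ := fun k ↦ A k * (F (x k) - F xstar) + V xstar (u k)
  have hstep : ∀ k < N, Φ (k + 1) - Φ k ≤ 2 * δ * A N + δt := by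
    intro k hk
    have hAk : A (k + 1) ≤ A N :=
      monotoneOn_Iic_of_le_succ (fun j hj ↦ (hAmono j hj).le) (Set.mem_Iic.mpr hk)
        Set.self_mem_Iic hk
    have hδA := mul_le_mul_of_nonneg_left hAk (by positivity : (0 : ℝ) ≤ 2 * δ)
    have hk' := hiter k hk xstar hxstar
    rw [eq_sub_of_add_eq' (hArec k hk).symm] at hk'
    simp only [Φ]
    linarith
  have hΦ : Φ N - Φ 0 ≤ N * (2 * δ * A N + δt) :=
    (sub_le_sum_of_sub_succ_le hstep).trans_eq (by rw [sum_const, card_range, nsmul_eq_mul])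
  have hVN := hVpos xstar hxstar (u N) (hu N le_rfl)
  refine le_rate_of_mul_le hL hδt hAN ?_
  simp only [Φ, hA0, hu0] at hΦ
  linarith

/-- The fast-gradient-method bound with constant oracle error `δ`
per iteration and constant inexactness `δ̃` of the auxiliary subproblem:
`F(x_N) − F(x_*) ≤ 8LR²/(N+1)² + 8Lδ̃/(N+1) + 2Nδ`. -/
theorem stmt11 {E : Type*} [NormedAddCommGroup E] [NormedSpace ℝ E]
    (Q : Set E) (hQ : Convex ℝ Q)
    (F : E → ℝ) (L R : ℝ) (hL : 0 < L) (hR : 0 < R)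
    (V : E → E → ℝ) (hVpos : ∀ x ∈ Q, ∀ y ∈ Q, 0 ≤ V x y)
    (N : ℕ) (hN : 1 ≤ N) (δ δt : ℝ) (hδ : 0 ≤ δ) (hδt : 0 ≤ δt)
    (x u : ℕ → E) (hx : ∀ k ≤ N, x k ∈ Q) (hu : ∀ k ≤ N, u k ∈ Q)
    (hu0 : u 0 = x 0)
    (A α : ℕ → ℝ) (hA0 : A 0 = 0)
    (hAmono : ∀ k < N, A k < A (k + 1))
    (hArec : ∀ k < N, A (k + 1) = A k + α (k + 1))
    (hAN : ((N : ℝ) + 1) ^ 2 / (8 * L) ≤ A N)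
    (hiter : ∀ k < N, ∀ z ∈ Q,
      A (k + 1) * F (x (k + 1)) - A k * F (x k) + V z (u (k + 1)) - V z (u k) ≤
        α (k + 1) * F z + 2 * δ * A (k + 1) + δt)
    (xstar : E) (hxstar : xstar ∈ Q) (hmin : ∀ z ∈ Q, F xstar ≤ F z)
    (hR2 : V xstar (x 0) ≤ R ^ 2) :
    F (x N) - F xstar ≤ 8 * L * R ^ 2 / ((N : ℝ) + 1) ^ 2
      + 8 * L * δt / ((N : ℝ) + 1) + 2 * N * δ :=
  stmt11_general Q F L R hL V hVpos N δ δt hδ hδt x u hu hu0 A α hA0 hAmono hArec hAN hiter xstar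
    hxstar hR2
end

section
/- Let F : E → ℝ be convex and differentiable on a convex set Q ⊆ E, let ν ∈ [0,1] and L_ν > 0, and suppose the gradient of F satisfies the Hölder condition ‖∇F(x) − ∇F(y)‖ ≤ L_ν·‖x − y‖^ν for all x, y ∈ Q. Then for every δ > 0 and all x, y ∈ Q: 0 ≤ F(x) − F(y) − ⟨∇F(y), x − y⟩ ≤ (L(δ)/2)·‖x − y‖² + δ, where L(δ) = L_ν·( (L_ν/(2δ))·((1−ν)/(1+ν)) )^{(1−ν)/(1+ν)} (with the convention that the factor equals 1 when ν = 1). -/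
/-!
Convexity puts `F` above its tangent planes, which is the lower bound. For the upper bound,
restrict `F` to the segment `t ↦ y + t (x - y)`: the Hölder condition bounds the growth of the
derivative of the restriction by `L_ν t^ν ‖x - y‖^(1+ν)`, and comparing with the antiderivative
of that bound gives
`F x - F y - ⟪∇F y, x - y⟫ ≤ L_ν ‖x - y‖^(1+ν) / (1 + ν)`. The weighted AM-GM inequality with
weights `(1 + ν)/2` and `(1 - ν)/2` trades the power `1 + ν` for a quadratic term plus `δ`;
`L(δ)` is the coefficient for which this trade is exact.
-/

open Set Real

lemma ConvexOn.le_sub_of_hasFDerivAt {E : Type*} [NormedAddCommGroup E] [NormedSpace ℝ E]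
    {Q : Set E} {f : E → ℝ} {f' : E →L[ℝ] ℝ} {x y : E} (hf : ConvexOn ℝ Q f) (hx : x ∈ Q)
    (hy : y ∈ Q) (hf' : HasFDerivAt f f' y) :
    f' (x - y) ≤ f x - f y := by
  set ℓ : ℝ →ᵃ[ℝ] E := AffineMap.lineMap y x
  have hφ : ConvexOn ℝ (ℓ ⁻¹' Q) (f ∘ ℓ) := hf.comp_affineMap ℓ
  have hderiv : HasDerivAt (f ∘ ℓ) (f' (x - y)) 0 :=
    hf'.comp_hasDerivAt_of_eq 0 AffineMap.hasDerivAt_lineMap (by simp [ℓ])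
  simpa [ℓ, slope_def_field] using
    hφ.le_slope_of_hasDerivAt (by simpa [ℓ] using hy) (by simpa [ℓ] using hx) zero_lt_one hderiv

lemma sub_sub_le_of_hasDerivAt_of_sub_le_rpow {φ φ' : ℝ → ℝ} {K ν : ℝ} (hν : 0 ≤ ν)
    (hφ : ∀ t ∈ Icc (0 : ℝ) 1, HasDerivAt φ (φ' t) t)
    (hφ' : ∀ t ∈ Icc (0 : ℝ) 1, φ' t - φ' 0 ≤ K * t ^ ν) :
    φ 1 - φ 0 - φ' 0 ≤ K / (1 + ν) := by
  set ψ : ℝ → ℝ := fun t ↦ φ t - t * φ' 0 - K / (1 + ν) * t ^ (1 + ν)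
  have hψ : ∀ t ∈ Icc (0 : ℝ) 1, HasDerivAt ψ (φ' t - φ' 0 - K * t ^ ν) t := by
    intro t ht
    have hpow := Real.hasDerivAt_rpow_const (x := t) (p := 1 + ν) (Or.inr (by linarith))
    refine (((hφ t ht).sub ((hasDerivAt_id t).mul_const (φ' 0))).sub
      (hpow.const_mul (K / (1 + ν)))).congr_deriv ?_
    rw [add_sub_cancel_left]
    field_simp
  have hanti : AntitoneOn ψ (Icc 0 1) := by
    refine antitoneOn_of_hasDerivWithinAt_nonpos (f' := fun t ↦ φ' t - φ' 0 - K * t ^ ν)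
      (convex_Icc 0 1)
      (fun t ht ↦ (hψ t ht).continuousAt.continuousWithinAt) (fun t ht ↦ ?_) (fun t ht ↦ ?_)
    · exact (hψ t (interior_subset ht)).hasDerivWithinAt
    · linarith [hφ' t (interior_subset ht)]
  have := hanti (left_mem_Icc.2 zero_le_one) (right_mem_Icc.2 zero_le_one) zero_le_one
  simp only [ψ, zero_rpow (by linarith : 1 + ν ≠ 0), one_rpow] at this
  linarith

lemma sub_sub_le_of_holder_fderiv {E : Type*} [NormedAddCommGroup E] [NormedSpace ℝ E]
    {Q : Set E} {f : E → ℝ} {f' : E → E →L[ℝ] ℝ} {L ν : ℝ} {x y : E} (hQ : Convex ℝ Q)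
    (hf : ∀ z ∈ Q, HasFDerivAt f (f' z) z) (hν : 0 ≤ ν)
    (hholder : ∀ z ∈ Q, ‖f' z - f' y‖ ≤ L * ‖z - y‖ ^ ν) (hx : x ∈ Q) (hy : y ∈ Q) :
    f x - f y - f' y (x - y) ≤ L / (1 + ν) * ‖x - y‖ ^ (1 + ν) := by
  set ℓ : ℝ →ᵃ[ℝ] E := AffineMap.lineMap y x
  have hℓ : ∀ t ∈ Icc (0 : ℝ) 1, ℓ t ∈ Q := fun t ht ↦ hQ.lineMap_mem hy hx ht
  have hφ : ∀ t ∈ Icc (0 : ℝ) 1, HasDerivAt (f ∘ ℓ) (f' (ℓ t) (x - y)) t := fun t ht ↦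
    (hf _ (hℓ t ht)).comp_hasDerivAt t AffineMap.hasDerivAt_lineMap
  have hφ' : ∀ t ∈ Icc (0 : ℝ) 1,
      f' (ℓ t) (x - y) - f' (ℓ 0) (x - y) ≤ L * ‖x - y‖ ^ (1 + ν) * t ^ ν := by
    intro t ht
    have hdist : ‖ℓ t - y‖ = t * ‖x - y‖ := by
      rw [← vsub_eq_sub, AffineMap.lineMap_vsub_left, norm_smul, norm_of_nonneg ht.1, vsub_eq_sub]
    calc f' (ℓ t) (x - y) - f' (ℓ 0) (x - y) = (f' (ℓ t) - f' y) (x - y) := by simp [ℓ]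
      _ ≤ ‖f' (ℓ t) - f' y‖ * ‖x - y‖ := (le_abs_self _).trans ((f' (ℓ t) - f' y).le_opNorm _)
      _ ≤ L * ‖ℓ t - y‖ ^ ν * ‖x - y‖ := by gcongr; exact hholder _ (hℓ t ht)
      _ = L * ‖x - y‖ ^ (1 + ν) * t ^ ν := by
        rw [hdist, mul_rpow ht.1 (norm_nonneg _), rpow_one_add' (norm_nonneg _) (by linarith)]
        ring
  have := sub_sub_le_of_hasDerivAt_of_sub_le_rpow hν hφ hφ'
  simp only [Function.comp_apply, ℓ, AffineMap.lineMap_apply_zero, AffineMap.lineMap_apply_one]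
    at this
  exact this.trans_eq (by ring)

lemma rpow_one_add_le_weighted {ν M T : ℝ} (hν0 : 0 ≤ ν) (hν1 : ν ≤ 1) (hM : 0 < M)
    (hT : 0 ≤ T) :
    T ^ (1 + ν) ≤ (1 + ν) / 2 * (M ^ ((1 - ν) / (1 + ν)) * T ^ 2) + (1 - ν) / 2 * M⁻¹ := by
  have hprod : (M ^ ((1 - ν) / (1 + ν)) * T ^ 2) ^ ((1 + ν) / 2) * M⁻¹ ^ ((1 - ν) / 2)
      = T ^ (1 + ν) := by
    rw [mul_rpow (by positivity) (by positivity), ← rpow_mul hM.le, ← rpow_natCast_mul hT,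
      inv_rpow hM.le]
    have hexp : (1 - ν) / (1 + ν) * ((1 + ν) / 2) = (1 - ν) / 2 := by
      field_simp
    rw [hexp, mul_right_comm, mul_inv_cancel₀ (rpow_pos_of_pos hM _).ne', one_mul]
    congr 1
    push_cast
    ring
  rw [← hprod]
  exact geom_mean_le_arith_mean2_weighted (by linarith) (by linarith) (by positivity)
    (by positivity) (by ring)

/-- `L(δ)`. At `ν = 1` the base and the exponent both vanish and `0 ^ 0 = 1` gives `L(δ) = L`. -/
noncomputable def holderOracleConstant (L ν δ : ℝ) : ℝ :=
  L * ((L / (2 * δ)) * ((1 - ν) / (1 + ν))) ^ ((1 - ν) / (1 + ν))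

lemma div_one_add_mul_rpow_le_holderOracleConstant {ν L δ T : ℝ} (hν : ν ∈ Icc (0 : ℝ) 1)
    (hL : 0 < L) (hδ : 0 < δ) (hT : 0 ≤ T) :
    L / (1 + ν) * T ^ (1 + ν) ≤ holderOracleConstant L ν δ / 2 * T ^ 2 + δ := by
  obtain ⟨hν0, hν1⟩ := hν
  rcases hν1.eq_or_lt with rfl | hν1
  · norm_num [holderOracleConstant]
    linarith
  have hν1' : 0 < 1 - ν := by linarith
  set M := L / (2 * δ) * ((1 - ν) / (1 + ν))
  have hM : 0 < M := by positivity
  calc L / (1 + ν) * T ^ (1 + ν)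
      ≤ L / (1 + ν) * ((1 + ν) / 2 * (M ^ ((1 - ν) / (1 + ν)) * T ^ 2) + (1 - ν) / 2 * M⁻¹) := by
        gcongr
        exact rpow_one_add_le_weighted hν0 hν1.le hM hT
    _ = holderOracleConstant L ν δ / 2 * T ^ 2 + δ := by
        simp only [holderOracleConstant, M]
        field_simp

/-- A convex function with `ν`-Hölder-continuous gradient on `Q`
furnishes a `(δ, L(δ))`-oracle for every `δ > 0`, where
`L(δ) = L_ν · ((L_ν/(2δ))·((1−ν)/(1+ν)))^{(1−ν)/(1+ν)}` (real-power convention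
gives the factor `1` when `ν = 1`). -/
theorem stmt12 {E : Type*} [NormedAddCommGroup E] [InnerProductSpace ℝ E]
    (Q : Set E) (hQ : Convex ℝ Q)
    (F : E → ℝ) (hF : ConvexOn ℝ Q F)
    (F' : E → E) (hder : ∀ y ∈ Q, HasFDerivAt F (innerSL ℝ (F' y)) y)
    (ν Lν : ℝ) (hν : ν ∈ Set.Icc (0:ℝ) 1) (hLν : 0 < Lν)
    (hHolder : ∀ x ∈ Q, ∀ y ∈ Q, ‖F' x - F' y‖ ≤ Lν * ‖x - y‖ ^ ν)
    (δ : ℝ) (hδ : 0 < δ) :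
    ∀ x ∈ Q, ∀ y ∈ Q,
      0 ≤ F x - F y - (inner ℝ (F' y) (x - y) : ℝ) ∧
      F x - F y - (inner ℝ (F' y) (x - y) : ℝ) ≤
        Lν * ((Lν / (2 * δ)) * ((1 - ν) / (1 + ν))) ^ ((1 - ν) / (1 + ν)) / 2
          * ‖x - y‖ ^ 2 + δ := by
  intro x hx y hy
  have hholder : ∀ z ∈ Q, ‖innerSL ℝ (F' z) - innerSL ℝ (F' y)‖ ≤ Lν * ‖z - y‖ ^ ν := by
    intro z hz
    rw [← map_sub, innerSL_apply_norm]
    exact hHolder z hz y hy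
  constructor
  · have := hF.le_sub_of_hasFDerivAt hx hy (hder y hy)
    rw [innerSL_apply_apply] at this
    linarith
  · calc F x - F y - inner ℝ (F' y) (x - y) ≤ Lν / (1 + ν) * ‖x - y‖ ^ (1 + ν) := by
          simpa only [innerSL_apply_apply] using
            sub_sub_le_of_holder_fderiv hQ hder hν.1 hholder hx hy
      _ ≤ holderOracleConstant Lν ν δ / 2 * ‖x - y‖ ^ 2 + δ :=
          div_one_add_mul_rpow_le_holderOracleConstant hν hLν hδ (norm_nonneg _)
end

section
/- Let ν ∈ [0,1], L_ν > 0, ε > 0, and let (α_k)_{k≥0}, (A_k)_{k≥0}, (L_k)_{k≥1} be real sequences with α_0 = 0, A_0 = 0, A_{k+1} = A_k + α_{k+1}, α_{k+1} > 0, A_{k+1} = L_{k+1}·α_{k+1}², and L_{k+1} ≤ 2·L(δ_k) for each k ≥ 0, where δ_k = ε·α_{k+1}/(4·A_{k+1}) and L(δ) = L_ν·( (L_ν/(2δ))·((1−ν)/(1+ν)) )^{(1−ν)/(1+ν)} (with the convention that the factor equals 1 when ν = 1). Then for every N ≥ 1: A_N ≥ N^{(1+3ν)/(1+ν)}·ε^{(1−ν)/(1+ν)}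 / ( 2^{(2+4ν)/(1+ν)}·L_ν^{2/(1+ν)} ). -/
/-! With `ρ = (1 - ν) / (1 + ν)` and `p = 2 - ρ = (1 + 3ν) / (1 + ν)`, the step condition
`L_{k+1} ≤ 2 L(δ_k)` rearranges to `α_{k+1}^p ≥ D A_{k+1}^{p-1}` with `D = ε^ρ / (2 Lν)^{1+ρ}`.
Concavity of `t ↦ t^{1/p}` turns this into `A_{k+1}^{1/p} - A_k^{1/p} ≥ D^{1/p} / p`, so
`A_N ≥ D (N / p)^p`, and `p^p ≤ 4^{p-1}` on `[1, 2]` gives the stated constant. -/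

theorem rpow_self_le_four_rpow_sub_one {p : ℝ} (hp1 : 1 ≤ p) (hp2 : p ≤ 2) :
    p ^ p ≤ (4 : ℝ) ^ (p - 1) := by
  -- `x ↦ x log x` is convex, vanishes at 1 and equals `log 4` at 2.
  have hchord := Real.convexOn_mul_log.2 (Set.mem_Ici.2 zero_le_one)
    (Set.mem_Ici.2 zero_le_two) (sub_nonneg.2 hp2) (sub_nonneg.2 hp1) (by ring)
  simp only [smul_eq_mul, Real.log_one, mul_zero, zero_add,
    show (2 - p) * 1 + (p - 1) * 2 = p by ring] at hchord
  have hlog4 : Real.log 4 = 2 * Real.log 2 := by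
    rw [show (4 : ℝ) = 2 ^ 2 by norm_num, Real.log_pow]; push_cast; ring
  rw [Real.rpow_def_of_pos (by linarith), Real.rpow_def_of_pos (by norm_num)]
  exact Real.exp_le_exp.2 (by rw [hlog4]; nlinarith)

theorem mul_sub_le_rpow_mul_sub_rpow {a b s : ℝ} (ha : 0 ≤ a) (hb : 0 < b)
    (hs0 : 0 < s) (hs1 : s ≤ 1) : s * (b - a) ≤ b ^ (1 - s) * (b ^ s - a ^ s) := by
  have hamgm := Real.geom_mean_le_arith_mean2_weighted (sub_nonneg.2 hs1) hs0.le hb.le ha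
    (by ring)
  have hsplit : b ^ (1 - s) * b ^ s = b := by rw [← Real.rpow_add hb]; simp
  nlinarith

theorem div_four_rpow_le_div_rpow {x p : ℝ} (hx : 0 ≤ x) (hp1 : 1 ≤ p) (hp2 : p ≤ 2) :
    x ^ p / (4 : ℝ) ^ (p - 1) ≤ (x / p) ^ p := by
  rw [Real.div_rpow hx (by linarith)]
  exact div_le_div_of_nonneg_left (by positivity) (by positivity)
    (rpow_self_le_four_rpow_sub_one hp1 hp2)

theorem mul_div_rpow_le_of_mul_rpow_le_sub_rpow {A : ℕ → ℝ} {p D : ℝ} (hp : 1 ≤ p)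
    (hD : 0 < D) (hA0 : A 0 = 0) (hinc : ∀ k, A k < A (k + 1))
    (hstep : ∀ k, D * A (k + 1) ^ (p - 1) ≤ (A (k + 1) - A k) ^ p) (N : ℕ) :
    D * (N / p) ^ p ≤ A N := by
  have hA : ∀ k, 0 ≤ A k := fun k =>
    hA0 ▸ (strictMono_nat_of_lt_succ hinc).monotone (Nat.zero_le k)
  have hp0 : 0 < p := by linarith
  set s := p⁻¹ with hs
  have hs0 : 0 < s := inv_pos.2 hp0
  have hps : p * s = 1 := mul_inv_cancel₀ hp0.ne'
  have hincr : ∀ k, s * D ^ s ≤ A (k + 1) ^ s - A k ^ s := by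
    intro k
    have hB : 0 < A (k + 1) := (hA k).trans_lt (hinc k)
    have hroot : D ^ s * A (k + 1) ^ (1 - s) ≤ A (k + 1) - A k := by
      have := Real.rpow_le_rpow (by positivity) (hstep k) hs0.le
      rwa [Real.mul_rpow hD.le (by positivity), ← Real.rpow_mul hB.le,
        ← Real.rpow_mul (sub_nonneg.2 (hinc k).le), hps, Real.rpow_one,
        show (p - 1) * s = 1 - s by rw [sub_mul, hps, one_mul]] at this
    refine le_of_mul_le_mul_left ?_ (by positivity : 0 < A (k + 1) ^ (1 - s))
    calc A (k + 1) ^ (1 - s) * (s * D ^ s) = s * (D ^ s * A (k + 1) ^ (1 - s)) := by ring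
      _ ≤ s * (A (k + 1) - A k) := mul_le_mul_of_nonneg_left hroot hs0.le
      _ ≤ A (k + 1) ^ (1 - s) * (A (k + 1) ^ s - A k ^ s) :=
        mul_sub_le_rpow_mul_sub_rpow (hA k) hB hs0 (inv_le_one_of_one_le₀ hp)
  have hlin : ∀ n : ℕ, n * (s * D ^ s) ≤ A n ^ s := by
    intro n
    induction n with
    | zero => simp [hA0, Real.zero_rpow hs0.ne']
    | succ n ih => push_cast; linarith [hincr n]
  calc D * (N / p) ^ p = (N * (s * D ^ s)) ^ p := by
        rw [Real.div_rpow (Nat.cast_nonneg N) hp0.le, Real.mul_rpow (by positivity) (by positivity),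
          Real.mul_rpow hs0.le (by positivity), ← Real.rpow_mul hD.le, mul_comm s p, hps,
          Real.rpow_one, hs, Real.inv_rpow hp0.le]
        ring
    _ ≤ (A N ^ s) ^ p := Real.rpow_le_rpow (by positivity) (hlin N) hp0.le
    _ = A N := by rw [← Real.rpow_mul (hA N), mul_comm s p, hps, Real.rpow_one]

/-- The paper's `L(δ)`, written with `ρ = (1 - ν) / (1 + ν)`; at `ν = 1` the factor `x ^ 0 = 1`
matches the paper's convention. -/
noncomputable def holderSmoothingConst (Lν ρ δ : ℝ) : ℝ := Lν * (Lν / (2 * δ) * ρ) ^ ρ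

theorem holderSmoothingConst_le {Lν ρ δ : ℝ} (hLν : 0 ≤ Lν) (hδ : 0 ≤ δ) (hρ0 : 0 ≤ ρ)
    (hρ1 : ρ ≤ 1) : holderSmoothingConst Lν ρ δ ≤ Lν * (Lν / (2 * δ)) ^ ρ := by
  have hx : 0 ≤ Lν / (2 * δ) := by positivity
  exact mul_le_mul_of_nonneg_left
    (Real.rpow_le_rpow (by positivity) (mul_le_of_le_one_right hx hρ1) hρ0) hLν

theorem le_rpow_of_le_two_mul_holderSmoothingConst {Lν ρ ε a B L : ℝ} (hLν : 0 < Lν)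
    (hρ0 : 0 ≤ ρ) (hρ1 : ρ ≤ 1) (hε : 0 < ε) (ha : 0 < a) (hB : 0 < B) (hBL : B = L * a ^ 2)
    (hL : L ≤ 2 * holderSmoothingConst Lν ρ (ε * a / (4 * B))) :
    ε ^ ρ / (2 * Lν) ^ (1 + ρ) * B ^ (1 - ρ) ≤ a ^ (2 - ρ) := by
  have hLeq : L = B / a ^ 2 := by rw [hBL]; field_simp
  have hδ : Lν / (2 * (ε * a / (4 * B))) = 2 * Lν * B / (ε * a) := by field_simp; ring
  have hbound := hL.trans (mul_le_mul_of_nonneg_left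
    (holderSmoothingConst_le hLν.le (by positivity) hρ0 hρ1) zero_le_two)
  rw [hLeq, hδ, Real.div_rpow (by positivity) (by positivity), Real.mul_rpow (by positivity) hB.le,
    Real.mul_rpow hε.le ha.le, div_le_iff₀ (by positivity), mul_div_assoc', mul_div_assoc',
    div_mul_eq_mul_div, le_div_iff₀ (by positivity)] at hbound
  rw [Real.rpow_sub hB, Real.rpow_one, Real.rpow_sub ha, Real.rpow_two,
    Real.rpow_add (by positivity), Real.rpow_one, div_mul_div_comm,
    div_le_div_iff₀ (by positivity) (by positivity)]
  linear_combination hbound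

theorem stmt13_general (ν Lν ε : ℝ) (hν : ν ∈ Set.Icc (0:ℝ) 1) (hLν : 0 < Lν)
    (hε : 0 < ε)
    (α A Lc : ℕ → ℝ)
    (hA0 : A 0 = 0)
    (hrec : ∀ k, A (k + 1) = A k + α (k + 1))
    (hαpos : ∀ k, 0 < α (k + 1))
    (hAL : ∀ k, A (k + 1) = Lc (k + 1) * α (k + 1) ^ 2)
    (hLc : ∀ k, Lc (k + 1) ≤ 2 *
      (Lν * ((Lν / (2 * (ε * α (k + 1) / (4 * A (k + 1))))) *
        ((1 - ν) / (1 + ν))) ^ ((1 - ν) / (1 + ν)))) :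
    ∀ N : ℕ, 1 ≤ N →
      (N : ℝ) ^ ((1 + 3 * ν) / (1 + ν)) * ε ^ ((1 - ν) / (1 + ν)) /
        ((2 : ℝ) ^ ((2 + 4 * ν) / (1 + ν)) * Lν ^ (2 / (1 + ν))) ≤ A N := by
  intro N _
  obtain ⟨hν0, hν1⟩ := hν
  have h1ν : 0 < 1 + ν := by linarith
  set ρ := (1 - ν) / (1 + ν) with hρ
  have hρ0 : 0 ≤ ρ := div_nonneg (by linarith) h1ν.le
  have hρ1 : ρ ≤ 1 := (div_le_one h1ν).2 (by linarith)
  have hinc : ∀ k, A k < A (k + 1) := fun k => by linarith [hrec k, hαpos k]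
  have hApos : ∀ k, 0 < A (k + 1) := fun k =>
    hA0 ▸ strictMono_nat_of_lt_succ hinc (Nat.succ_pos k)
  have hgrowth := mul_div_rpow_le_of_mul_rpow_le_sub_rpow (p := 2 - ρ)
    (D := ε ^ ρ / (2 * Lν) ^ (1 + ρ)) (by linarith)
    (by positivity) hA0 hinc (fun k => by
      rw [show 2 - ρ - 1 = 1 - ρ by ring, show A (k + 1) - A k = α (k + 1) by linarith [hrec k]]
      exact le_rpow_of_le_two_mul_holderSmoothingConst hLν hρ0 hρ1 hε (hαpos k)
        (hApos k) (hAL k) (hLc k)) N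
  have hdenom : (2 : ℝ) ^ ((2 + 4 * ν) / (1 + ν)) * Lν ^ (2 / (1 + ν))
      = (2 * Lν) ^ (1 + ρ) * 4 ^ (2 - ρ - 1) := by
    rw [show (2 + 4 * ν) / (1 + ν) = 1 + ρ + 2 * (2 - ρ - 1) by rw [hρ]; field_simp; ring,
      show 2 / (1 + ν) = 1 + ρ by rw [hρ]; field_simp; ring, Real.rpow_add two_pos,
      Real.rpow_mul zero_le_two, Real.mul_rpow zero_le_two hLν.le,
      show (2 : ℝ) ^ (2 : ℝ) = 4 by norm_num]
    ring
  calc (N : ℝ) ^ ((1 + 3 * ν) / (1 + ν)) * ε ^ ρ /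
        ((2 : ℝ) ^ ((2 + 4 * ν) / (1 + ν)) * Lν ^ (2 / (1 + ν)))
      = ε ^ ρ / (2 * Lν) ^ (1 + ρ) * (N ^ (2 - ρ) / 4 ^ (2 - ρ - 1)) := by
        rw [hdenom, show (1 + 3 * ν) / (1 + ν) = 2 - ρ by rw [hρ]; field_simp; ring]
        ring
    _ ≤ ε ^ ρ / (2 * Lν) ^ (1 + ρ) * (N / (2 - ρ)) ^ (2 - ρ) :=
        mul_le_mul_of_nonneg_left
          (div_four_rpow_le_div_rpow (Nat.cast_nonneg N) (by linarith) (by linarith))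
          (by positivity)
    _ ≤ A N := hgrowth

/-- Growth estimate for the coefficient sequence of the universal
fast gradient method: if `α_0 = A_0 = 0`, `A_{k+1} = A_k + α_{k+1}`,
`α_{k+1} > 0`, `A_{k+1} = L_{k+1} α_{k+1}²`, and `L_{k+1} ≤ 2·L(δ_k)` with
`δ_k = ε α_{k+1}/(4 A_{k+1})` and
`L(δ) = L_ν · ((L_ν/(2δ))·((1−ν)/(1+ν)))^{(1−ν)/(1+ν)}`, then for all `N ≥ 1`,
`A_N ≥ N^{(1+3ν)/(1+ν)} ε^{(1−ν)/(1+ν)} / (2^{(2+4ν)/(1+ν)} L_ν^{2/(1+ν)})`. -/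
theorem stmt13 (ν Lν ε : ℝ) (hν : ν ∈ Set.Icc (0:ℝ) 1) (hLν : 0 < Lν)
    (hε : 0 < ε)
    (α A Lc : ℕ → ℝ)
    (hα0 : α 0 = 0) (hA0 : A 0 = 0)
    (hrec : ∀ k, A (k + 1) = A k + α (k + 1))
    (hαpos : ∀ k, 0 < α (k + 1))
    (hAL : ∀ k, A (k + 1) = Lc (k + 1) * α (k + 1) ^ 2)
    (hLc : ∀ k, Lc (k + 1) ≤ 2 *
      (Lν * ((Lν / (2 * (ε * α (k + 1) / (4 * A (k + 1))))) *
        ((1 - ν) / (1 + ν))) ^ ((1 - ν) / (1 + ν)))) :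
    ∀ N : ℕ, 1 ≤ N →
      (N : ℝ) ^ ((1 + 3 * ν) / (1 + ν)) * ε ^ ((1 - ν) / (1 + ν)) /
        ((2 : ℝ) ^ ((2 + 4 * ν) / (1 + ν)) * Lν ^ (2 / (1 + ν))) ≤ A N :=
  stmt13_general ν Lν ε hν hLν hε α A Lc hA0 hrec hαpos hAL hLc
end

section
/- Let N ≥ 1, let x_0,…,x_N ∈ Q and u_0 = x_0, u_1,…,u_N ∈ Q, and let 0 = A_0 < A_1 < … < A_N with A_{k+1} = A_k + α_{k+1} and A_N ≥ (N+1)²/(8L). Suppose for each k = 0,…,N−1 and every x ∈ Q: A_{k+1}·F(x_{k+1}) − A_k·F(x_k) + V(x,u_{k+1}) − V(x,u_k) ≤ α_{k+1}·F(x) + 2R_Q². Suppose x_* ∈ Q minimizes F on Q, V(x_*,x_0) ≤ R², and V ≥ 0. Then F(x_N) − F(x_*) ≤ 8LR²/(N+1)² + 16L·R_Q²/(N+1). -/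
/-! The potential `Φ_k = A_k (F(x_k) − F(x_*)) + V(x_*, u_k)` grows by at most `2R_Q²` per step,
by the iteration inequality at `z = x_*`. Since `Φ_0 = V(x_*, x_0) ≤ R²` and `V ≥ 0`, this gives
`A_N (F(x_N) − F(x_*)) ≤ R² + 2N R_Q²`, and dividing by `A_N ≥ (N+1)²/(8L)` yields the rate. -/

theorem le_add_mul_of_forall_sub_le {g : ℕ → ℝ} {δ : ℝ} {N : ℕ}
    (hg : ∀ k < N, g (k + 1) - g k ≤ δ) : g N ≤ g 0 + N * δ := by
  have hsum : ∑ k ∈ Finset.range N, (g (k + 1) - g k) ≤ ∑ _k ∈ Finset.range N, δ :=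
    Finset.sum_le_sum fun k hk => hg k (Finset.mem_range.mp hk)
  rw [Finset.sum_range_sub, Finset.sum_const, Finset.card_range, nsmul_eq_mul] at hsum
  linarith

theorem weighted_gap_le {A α f v : ℕ → ℝ} {c δ : ℝ} {N : ℕ} (hA0 : A 0 = 0)
    (hArec : ∀ k < N, A (k + 1) = A k + α (k + 1))
    (hstep : ∀ k < N,
      A (k + 1) * f (k + 1) - A k * f k + v (k + 1) - v k ≤ α (k + 1) * c + δ) :
    A N * (f N - c) + v N ≤ v 0 + N * δ := by
  have h := le_add_mul_of_forall_sub_le (g := fun k => A k * (f k - c) + v k) (δ := δ) (N := N)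
    fun k hk => by linear_combination hstep k hk - c * hArec k hk
  simpa [hA0] using h

theorem le_rate_of_mul_le_s15 {L A n a b g : ℝ} (hL : 0 < L) (hn : 0 ≤ n) (ha : 0 ≤ a) (hb : 0 ≤ b)
    (hA : (n + 1) ^ 2 / (8 * L) ≤ A) (hg : A * g ≤ a + 2 * n * b) :
    g ≤ 8 * L * a / (n + 1) ^ 2 + 16 * L * b / (n + 1) := by
  have hn1 : 0 < n + 1 := by linarith
  have hApos : 0 < A := lt_of_lt_of_le (by positivity) hA
  have hA' : (n + 1) ^ 2 ≤ 8 * L * A := by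
    rwa [div_le_iff₀ (by positivity), mul_comm A] at hA
  calc g ≤ (a + 2 * n * b) / A := by rw [le_div_iff₀ hApos]; linarith
    _ ≤ 8 * L * (a + 2 * n * b) / (n + 1) ^ 2 := by
        rw [div_le_div_iff₀ hApos (by positivity)]
        nlinarith [mul_le_mul_of_nonneg_left hA' (by positivity : 0 ≤ a + 2 * n * b)]
    _ ≤ 8 * L * a / (n + 1) ^ 2 + 16 * L * b / (n + 1) := by
        rw [show 16 * L * b / (n + 1) = 16 * L * b * (n + 1) / (n + 1) ^ 2 by field_simp,
          ← add_div]
        gcongr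
        nlinarith [mul_nonneg hL.le hb]

theorem stmt15_general {E : Type*} [NormedAddCommGroup E] [NormedSpace ℝ E]
    (Q : Set E)
    (F : E → ℝ) (L R RQ : ℝ) (hL : 0 < L)
    (V : E → E → ℝ) (hVpos : ∀ x ∈ Q, ∀ y ∈ Q, 0 ≤ V x y)
    (N : ℕ)
    (x u : ℕ → E) (hu : ∀ k ≤ N, u k ∈ Q)
    (hu0 : u 0 = x 0)
    (A α : ℕ → ℝ) (hA0 : A 0 = 0)
    (hArec : ∀ k < N, A (k + 1) = A k + α (k + 1))
    (hAN : ((N : ℝ) + 1) ^ 2 / (8 * L) ≤ A N)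
    (hiter : ∀ k < N, ∀ z ∈ Q,
      A (k + 1) * F (x (k + 1)) - A k * F (x k) + V z (u (k + 1)) - V z (u k) ≤
        α (k + 1) * F z + 2 * RQ ^ 2)
    (xstar : E) (hxstar : xstar ∈ Q)
    (hR2 : V xstar (x 0) ≤ R ^ 2) :
    F (x N) - F xstar ≤ 8 * L * R ^ 2 / ((N : ℝ) + 1) ^ 2
      + 16 * L * RQ ^ 2 / ((N : ℝ) + 1) := by
  have hgap := weighted_gap_le (f := fun k => F (x k)) (v := fun k => V xstar (u k))
    hA0 hArec fun k hk => hiter k hk xstar hxstar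
  have hVN : 0 ≤ V xstar (u N) := hVpos _ hxstar _ (hu N le_rfl)
  rw [hu0] at hgap
  refine le_rate_of_mul_le_s15 hL N.cast_nonneg (sq_nonneg R) (sq_nonneg RQ) hAN ?_
  linarith

/-- Convergence of the conditional-gradient (Frank–Wolfe) version
of the fast method, where each auxiliary problem is solved with inexactness
`δ̃_k = 2R_Q²` and oracle error `δ_k = 0`:
`F(x_N) − F(x_*) ≤ 8LR²/(N+1)² + 16L R_Q²/(N+1)`. -/
theorem stmt15 {E : Type*} [NormedAddCommGroup E] [NormedSpace ℝ E]
    (Q : Set E) (hQ : Convex ℝ Q)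
    (F : E → ℝ) (L R RQ : ℝ) (hL : 0 < L) (hR : 0 < R) (hRQ : 0 < RQ)
    (V : E → E → ℝ) (hVpos : ∀ x ∈ Q, ∀ y ∈ Q, 0 ≤ V x y)
    (hVbound : ∀ x ∈ Q, ∀ y ∈ Q, V x y ≤ RQ ^ 2)
    (N : ℕ) (hN : 1 ≤ N)
    (x u : ℕ → E) (hx : ∀ k ≤ N, x k ∈ Q) (hu : ∀ k ≤ N, u k ∈ Q)
    (hu0 : u 0 = x 0)
    (A α : ℕ → ℝ) (hA0 : A 0 = 0)
    (hAmono : ∀ k < N, A k < A (k + 1))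
    (hArec : ∀ k < N, A (k + 1) = A k + α (k + 1))
    (hAN : ((N : ℝ) + 1) ^ 2 / (8 * L) ≤ A N)
    (hiter : ∀ k < N, ∀ z ∈ Q,
      A (k + 1) * F (x (k + 1)) - A k * F (x k) + V z (u (k + 1)) - V z (u k) ≤
        α (k + 1) * F z + 2 * RQ ^ 2)
    (xstar : E) (hxstar : xstar ∈ Q) (hmin : ∀ z ∈ Q, F xstar ≤ F z)
    (hR2 : V xstar (x 0) ≤ R ^ 2) :
    F (x N) - F xstar ≤ 8 * L * R ^ 2 / ((N : ℝ) + 1) ^ 2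
      + 16 * L * RQ ^ 2 / ((N : ℝ) + 1) :=
  stmt15_general Q F L R RQ hL V hVpos N x u hu hu0 A α hA0 hArec hAN hiter xstar hxstar hR2
end

section
/- Let f₁,…,f_m : E → ℝ be convex differentiable functions on the convex set Q such that each ∇f_i is L_i-Lipschitz on Q, and let f : ℝ^m → ℝ be M-Lipschitz with respect to the ℓ¹-norm on ℝ^m and nondecreasing in each coordinate. Set F(x) = f(f₁(x), …, f_m(x)). Then for all x, y ∈ Q: 0 ≤ F(x) − f( f₁(y) + ⟨∇f₁(y), x − y⟩, …, f_m(y) + ⟨∇f_m(y), x − y⟩ ) ≤ M·(Σ_{i=1}^m L_i)/2 · ‖x − y‖². -/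
/-!
Each `fᵢ` is squeezed between its linearization `ℓᵢ(x) = fᵢ(y) + ⟪∇fᵢ(y), x - y⟫` and
`ℓᵢ(x) + Lᵢ/2 ‖x - y‖²`: the lower bound is the first-order characterization of convexity, the
upper one the descent lemma for a gradient that is `Lᵢ`-Lipschitz. Since `f` is monotone, feeding
`(fᵢ(x))ᵢ` instead of `(ℓᵢ(x))ᵢ` can only increase it, and by at most `M` times the `ℓ¹`-distance
`Σᵢ (fᵢ(x) - ℓᵢ(x)) ≤ (Σᵢ Lᵢ)/2 ‖x - y‖²`.
-/

open AffineMap Set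
open scoped RealInnerProductSpace

section Gradient

variable {E : Type*} [NormedAddCommGroup E] [InnerProductSpace ℝ E]
  {Q : Set E} {φ : E → ℝ} {g : E → E} {x y : E}

theorem HasFDerivAt.hasDerivAt_comp_lineMap {t : ℝ} {G : E}
    (h : HasFDerivAt φ (innerSL ℝ G) (lineMap y x t)) :
    HasDerivAt (fun s : ℝ => φ (lineMap y x s)) ⟪G, x - y⟫ t :=
  h.comp_hasDerivAt t hasDerivAt_lineMap

theorem ConvexOn.inner_le_sub_of_hasFDerivAt (hφ : ConvexOn ℝ Q φ)
    (hder : HasFDerivAt φ (innerSL ℝ (g y)) y) (hx : x ∈ Q) (hy : y ∈ Q) :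
    ⟪g y, x - y⟫ ≤ φ x - φ y := by
  have hline : ConvexOn ℝ (lineMap y x ⁻¹' Q) (φ ∘ lineMap y x) := hφ.comp_affineMap _
  have hder₀ : HasFDerivAt φ (innerSL ℝ (g y)) (lineMap y x (0 : ℝ)) := by simpa using hder
  have hslope := hline.le_slope_of_hasDerivAt (x := 0) (y := 1) (by simpa using hy)
    (by simpa using hx) zero_lt_one hder₀.hasDerivAt_comp_lineMap
  simpa [slope_def_field] using hslope

theorem sub_sub_inner_le_of_lipschitzOn (hQ : Convex ℝ Q)
    (hder : ∀ z ∈ Q, HasFDerivAt φ (innerSL ℝ (g z)) z) {L : ℝ}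
    (hLip : ∀ a ∈ Q, ∀ b ∈ Q, ‖g a - g b‖ ≤ L * ‖a - b‖) (hx : x ∈ Q) (hy : y ∈ Q) :
    φ x - φ y - ⟪g y, x - y⟫ ≤ L / 2 * ‖x - y‖ ^ 2 := by
  set d := x - y
  have hmem : ∀ t ∈ Icc (0 : ℝ) 1, lineMap y x t ∈ Q := fun t ht => hQ.lineMap_mem hy hx ht
  -- `φ` along the segment minus its quadratic model; the Lipschitz bound makes it antitone.
  set ψ : ℝ → ℝ := fun t => φ (lineMap y x t) - t * ⟪g y, d⟫ - L / 2 * ‖d‖ ^ 2 * t ^ 2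
  set ψ' : ℝ → ℝ := fun t => ⟪g (lineMap y x t) - g y, d⟫ - L * ‖d‖ ^ 2 * t
  have hψ : ∀ t ∈ Icc (0 : ℝ) 1, HasDerivAt ψ (ψ' t) t := by
    intro t ht
    have hφt := (hder _ (hmem t ht)).hasDerivAt_comp_lineMap
    refine ((hφt.sub ((hasDerivAt_id t).mul_const ⟪g y, d⟫)).sub
      (((hasDerivAt_id t).pow 2).const_mul (L / 2 * ‖d‖ ^ 2))).congr_deriv ?_
    simp only [ψ', inner_sub_left, _root_.id]
    ring
  have hψ'_nonpos : ∀ t ∈ Icc (0 : ℝ) 1, ψ' t ≤ 0 := by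
    intro t ht
    have hdist : lineMap y x t - y = t • d := lineMap_vsub_left y x t
    have hgrad : ‖g (lineMap y x t) - g y‖ ≤ L * (t * ‖d‖) := by
      simpa [hdist, norm_smul, abs_of_nonneg ht.1] using hLip _ (hmem t ht) y hy
    have := (real_inner_le_norm (g (lineMap y x t) - g y) d).trans
      (mul_le_mul_of_nonneg_right hgrad (norm_nonneg d))
    simp only [ψ']
    nlinarith
  have hanti : AntitoneOn ψ (Icc 0 1) :=
    antitoneOn_of_hasDerivWithinAt_nonpos (convex_Icc 0 1)
      (fun t ht => (hψ t ht).continuousAt.continuousWithinAt)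
      (fun t ht => (hψ t (interior_subset ht)).hasDerivWithinAt)
      (fun t ht => hψ'_nonpos t (interior_subset ht))
  have := hanti (left_mem_Icc.2 zero_le_one) (right_mem_Icc.2 zero_le_one) zero_le_one
  simp only [ψ, lineMap_apply_zero, lineMap_apply_one] at this
  linarith

end Gradient

theorem sub_le_mul_sum_of_monotone_of_lipschitz {ι : Type*} [Fintype ι] {f : (ι → ℝ) → ℝ}
    {M : ℝ} (hM : 0 ≤ M) (hfLip : ∀ u v : ι → ℝ, |f u - f v| ≤ M * ∑ i, |u i - v i|)
    (hmono : Monotone f) {u v δ : ι → ℝ} (hvu : v ≤ u) (hδ : ∀ i, u i - v i ≤ δ i) :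
    0 ≤ f u - f v ∧ f u - f v ≤ M * ∑ i, δ i := by
  refine ⟨sub_nonneg.2 (hmono hvu), (le_abs_self _).trans ((hfLip u v).trans ?_)⟩
  gcongr with i
  rw [abs_of_nonneg (sub_nonneg.2 (hvu i))]
  exact hδ i

theorem stmt17_general {E : Type*} [NormedAddCommGroup E] [InnerProductSpace ℝ E]
    (Q : Set E) (hQ : Convex ℝ Q) (m : ℕ)
    (fi : Fin m → E → ℝ) (hconv : ∀ i, ConvexOn ℝ Q (fi i))
    (gi : Fin m → E → E)
    (hder : ∀ i, ∀ y ∈ Q, HasFDerivAt (fi i) (innerSL ℝ (gi i y)) y)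
    (Li : Fin m → ℝ)
    (hLip : ∀ i, ∀ x ∈ Q, ∀ y ∈ Q, ‖gi i x - gi i y‖ ≤ Li i * ‖x - y‖)
    (f : (Fin m → ℝ) → ℝ) (M : ℝ) (hM : 0 < M)
    (hfLip : ∀ u v : Fin m → ℝ, |f u - f v| ≤ M * ∑ i, |u i - v i|)
    (hmono : ∀ u v : Fin m → ℝ, (∀ i, u i ≤ v i) → f u ≤ f v)
    (F : E → ℝ) (hF : ∀ x, F x = f (fun i => fi i x)) :
    ∀ x ∈ Q, ∀ y ∈ Q,
      0 ≤ F x - f (fun i => fi i y + (inner ℝ (gi i y) (x - y) : ℝ)) ∧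
      F x - f (fun i => fi i y + (inner ℝ (gi i y) (x - y) : ℝ)) ≤
        M * (∑ i, Li i) / 2 * ‖x - y‖ ^ 2 := by
  intro x hx y hy
  have hlower : ∀ i, fi i y + ⟪gi i y, x - y⟫ ≤ fi i x := fun i => by
    linarith [(hconv i).inner_le_sub_of_hasFDerivAt (hder i y hy) hx hy]
  have hupper : ∀ i, fi i x - (fi i y + ⟪gi i y, x - y⟫) ≤ Li i / 2 * ‖x - y‖ ^ 2 :=
    fun i => by linarith [sub_sub_inner_le_of_lipschitzOn hQ (hder i) (hLip i) hx hy]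
  rw [hF]
  convert sub_le_mul_sum_of_monotone_of_lipschitz hM.le hfLip hmono hlower hupper using 2
  rw [← Finset.sum_mul, ← Finset.sum_div]
  ring

/-- superposition of functions: If each `f_i` is convex and
differentiable on `Q` with `L_i`-Lipschitz gradient, and `f : ℝ^m → ℝ` is
`M`-Lipschitz w.r.t. the `ℓ¹`-norm and nondecreasing in each coordinate, then
for `F(x) = f(f₁(x), …, f_m(x))` and all `x, y ∈ Q`:
`0 ≤ F(x) − f(f₁(y) + ⟨∇f₁(y), x−y⟩, …) ≤ M (Σᵢ Lᵢ)/2 · ‖x − y‖²`. -/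
theorem stmt17 {E : Type*} [NormedAddCommGroup E] [InnerProductSpace ℝ E]
    (Q : Set E) (hQ : Convex ℝ Q) (m : ℕ)
    (fi : Fin m → E → ℝ) (hconv : ∀ i, ConvexOn ℝ Q (fi i))
    (gi : Fin m → E → E)
    (hder : ∀ i, ∀ y ∈ Q, HasFDerivAt (fi i) (innerSL ℝ (gi i y)) y)
    (Li : Fin m → ℝ) (hLi : ∀ i, 0 < Li i)
    (hLip : ∀ i, ∀ x ∈ Q, ∀ y ∈ Q, ‖gi i x - gi i y‖ ≤ Li i * ‖x - y‖)
    (f : (Fin m → ℝ) → ℝ) (M : ℝ) (hM : 0 < M)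
    (hfLip : ∀ u v : Fin m → ℝ, |f u - f v| ≤ M * ∑ i, |u i - v i|)
    (hmono : ∀ u v : Fin m → ℝ, (∀ i, u i ≤ v i) → f u ≤ f v)
    (F : E → ℝ) (hF : ∀ x, F x = f (fun i => fi i x)) :
    ∀ x ∈ Q, ∀ y ∈ Q,
      0 ≤ F x - f (fun i => fi i y + (inner ℝ (gi i y) (x - y) : ℝ)) ∧
      F x - f (fun i => fi i y + (inner ℝ (gi i y) (x - y) : ℝ)) ≤
        M * (∑ i, Li i) / 2 * ‖x - y‖ ^ 2 :=
  stmt17_general Q hQ m fi hconv gi hder Li hLip f M hM hfLip hmono F hF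
end

section
/- Let F : E × H → ℝ be jointly convex and differentiable with L-Lipschitz gradient (‖∇F(y′,x′) − ∇F(y,x)‖ ≤ L‖(y′,x′) − (y,x)‖ for all y, y′ ∈ Q, x, x′ ∈ H), let Q ⊆ E be convex and closed, and define f(x) = min_{y ∈ Q} F(y,x), assuming the minimum is attained for every x ∈ H. Fix x ∈ H, δ ≥ 0, and ỹ ∈ Q such that ⟨∇_y F(ỹ,x), y − ỹ⟩ ≥ −δ for all y ∈ Q. Then: (a) F(ỹ,x) − f(x) ≤ δ; (b) x ↦ f(x) is differentiable with ‖∇f(x′) − ∇f(x)‖ ≤ L‖x′ − x‖ for all x, x′ ∈ H; and (c) for all z ∈ H: 0 ≤ f(z) − (F(ỹ,x) − 2δ) − ⟨∇_x F(ỹ,x), z − x⟩ ≤ L‖z − x‖² + 6δ, i.e. the pair (F(ỹ,x) − 2δ, ⟨∇_x F(ỹ,x), · − x⟩) is a (6δ, 2L)-model of f at x. -/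
/-!
Let `y(w)` be an exact minimizer of `F(·, w)` on `Q` and `g(w) = ∇ₓF(y(w), w)`. Joint convexity
and first-order optimality of `y(w)` give `f(w) + ⟪g(w), z - w⟫ ≤ f(z)`, while the descent lemma for
`F(y(w), ·)` gives `f(z) ≤ F(y(w), z) ≤ f(w) + ⟪g(w), z - w⟫ + L/2 ‖z - w‖²`. This sandwich makes
`g` the gradient of `f`, and co-coercivity makes it `L`-Lipschitz. Parts (a) and (c) use the same
two inequalities at `(ỹ, x)`, where first-order optimality only holds up to `δ`.
-/

open Set Filter Asymptotics
open scoped RealInnerProductSpace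

section NormedSpace

variable {V : Type*} [NormedAddCommGroup V] [NormedSpace ℝ V]

theorem ConvexOn.add_fderiv_sub_le {s : Set V} {g : V → ℝ} (hg : ConvexOn ℝ s g)
    {p q : V} (hq : q ∈ s) (hp : p ∈ s) {D : V →L[ℝ] ℝ} (hD : HasFDerivAt g D q) :
    g q + D (p - q) ≤ g p := by
  set ℓ : ℝ →ᵃ[ℝ] V := AffineMap.lineMap q p
  have hderiv : HasDerivAt (g ∘ ℓ) (D (p - q)) 0 := by
    rw [← AffineMap.lineMap_apply_zero q p (k := ℝ)] at hD
    exact hD.comp_hasDerivAt 0 AffineMap.hasDerivAt_lineMap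
  have := (hg.comp_affineMap ℓ).le_slope_of_hasDerivAt (by simpa [ℓ]) (by simpa [ℓ])
    zero_lt_one hderiv
  simp only [ℓ, slope_def_field, Function.comp_apply, AffineMap.lineMap_apply_zero,
    AffineMap.lineMap_apply_one, sub_zero, div_one] at this
  linarith

theorem IsMinOn.fderiv_sub_nonneg {s : Set V} (hs : Convex ℝ s) {g : V → ℝ} {a b : V}
    (hmin : IsMinOn g s a) (ha : a ∈ s) (hb : b ∈ s) {D : V →L[ℝ] ℝ}
    (hD : HasFDerivAt g D a) : 0 ≤ D (b - a) :=
  hmin.localize.hasFDerivWithinAt_nonneg hD.hasFDerivWithinAt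
    (sub_mem_posTangentConeAt_of_segment_subset (hs.segment_subset ha hb))

theorem hasFDerivAt_of_norm_sub_le_sq {W : Type*} [NormedAddCommGroup W] [NormedSpace ℝ W]
    {f : V → W} {D : V →L[ℝ] W} {w : V} {C : ℝ}
    (h : ∀ z, ‖f z - f w - D (z - w)‖ ≤ C * ‖z - w‖ ^ 2) : HasFDerivAt f D w := by
  rw [hasFDerivAt_iff_isLittleO_nhds_zero]
  refine (IsBigO.of_bound C (Eventually.of_forall fun v => ?_)).trans_isLittleO
    (isLittleO_norm_pow_id one_lt_two)
  simpa using h (w + v)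

end NormedSpace

section InnerProductSpace

variable {H : Type*} [NormedAddCommGroup H] [InnerProductSpace ℝ H]

theorem le_add_inner_add_sq_of_lipschitz_gradient {g : H → ℝ} {G : H → H} {L : ℝ}
    (hg : ∀ w, HasFDerivAt g (innerSL ℝ (G w)) w)
    (hG : ∀ w w', ‖G w' - G w‖ ≤ L * ‖w' - w‖) (x z : H) :
    g z ≤ g x + ⟪G x, z - x⟫ + L / 2 * ‖z - x‖ ^ 2 := by
  set c := z - x
  set ℓ : ℝ →ᵃ[ℝ] H := AffineMap.lineMap x z
  have hℓ : ∀ t, ℓ t - x = t • c := fun t => AffineMap.lineMap_vsub_left x z t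
  set φ : ℝ → ℝ := fun t => g (ℓ t) - t * ⟪G x, c⟫ - L / 2 * ‖c‖ ^ 2 * t ^ 2
  have hφ : ∀ t, HasDerivAt φ (⟪G (ℓ t) - G x, c⟫ - L * ‖c‖ ^ 2 * t) t := by
    intro t
    have := (((hg (ℓ t)).comp_hasDerivAt t AffineMap.hasDerivAt_lineMap).sub
      ((hasDerivAt_id t).mul_const ⟪G x, c⟫)).sub
      ((hasDerivAt_pow 2 t).const_mul (L / 2 * ‖c‖ ^ 2))
    refine this.congr_deriv ?_
    simp only [innerSL_apply_apply, inner_sub_left, c]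
    ring
  have hφ' : ∀ t ∈ interior (Ici (0 : ℝ)), ⟪G (ℓ t) - G x, c⟫ - L * ‖c‖ ^ 2 * t ≤ 0 := by
    intro t ht
    rw [interior_Ici] at ht
    have := hG x (ℓ t)
    rw [hℓ, norm_smul, Real.norm_of_nonneg ht.le] at this
    nlinarith [real_inner_le_norm (G (ℓ t) - G x) c, norm_nonneg c]
  have hanti := antitoneOn_of_hasDerivWithinAt_nonpos (convex_Ici 0)
    (fun t _ => (hφ t).continuousAt.continuousWithinAt) (fun t _ => (hφ t).hasDerivWithinAt) hφ'
  have := hanti self_mem_Ici (show (0:ℝ) ≤ 1 by norm_num) zero_le_one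
  simp only [φ, ℓ, AffineMap.lineMap_apply_one, AffineMap.lineMap_apply_zero, one_mul, one_pow,
    mul_one, zero_mul, sub_zero, ne_eq, OfNat.ofNat_ne_zero, not_false_eq_true, zero_pow, mul_zero,
    tsub_le_iff_right] at this
  linarith

/-- Co-coercivity of the gradient of a convex `L`-smooth function. -/
theorem add_inner_add_sq_le_of_sandwich {f : H → ℝ} {g : H → H} {L : ℝ} (hL : 0 < L)
    (hlow : ∀ w z, f w + ⟪g w, z - w⟫ ≤ f z)
    (hup : ∀ w z, f z ≤ f w + ⟪g w, z - w⟫ + L / 2 * ‖z - w‖ ^ 2) (a b : H) :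
    f a + ⟪g a, b - a⟫ + 1 / (2 * L) * ‖g b - g a‖ ^ 2 ≤ f b := by
  set d := g b - g a
  -- Evaluate both bounds at the gradient step `b - L⁻¹ • d`.
  have h1 := hup b (b - L⁻¹ • d)
  have h2 := hlow a (b - L⁻¹ • d)
  rw [sub_sub_cancel_left, norm_neg, norm_smul, Real.norm_of_nonneg (inv_nonneg.2 hL.le),
    inner_neg_right, inner_smul_right] at h1
  rw [sub_right_comm, inner_sub_right, inner_smul_right] at h2
  have hd : L⁻¹ * ⟪g b, d⟫ - L⁻¹ * ⟪g a, d⟫ = 1 / L * ‖d‖ ^ 2 := by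
    rw [← mul_sub, ← inner_sub_left, real_inner_self_eq_norm_sq, one_div]
  have hsq : L / 2 * (L⁻¹ * ‖d‖) ^ 2 = 1 / (2 * L) * ‖d‖ ^ 2 := by field_simp
  have hhalf : 1 / L * ‖d‖ ^ 2 = 2 * (1 / (2 * L) * ‖d‖ ^ 2) := by field_simp
  linarith

theorem norm_sub_le_of_sandwich {f : H → ℝ} {g : H → H} {L : ℝ} (hL : 0 < L)
    (hlow : ∀ w z, f w + ⟪g w, z - w⟫ ≤ f z)
    (hup : ∀ w z, f z ≤ f w + ⟪g w, z - w⟫ + L / 2 * ‖z - w‖ ^ 2) (a b : H) :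
    ‖g a - g b‖ ≤ L * ‖a - b‖ := by
  have hab := add_inner_add_sq_le_of_sandwich hL hlow hup a b
  have hba := add_inner_add_sq_le_of_sandwich hL hlow hup b a
  rw [norm_sub_rev (g b)] at hab
  have hinner : ⟪g a - g b, a - b⟫ = -⟪g a, b - a⟫ - ⟪g b, a - b⟫ := by
    simp only [inner_sub_left, inner_sub_right]; ring
  have hcoco : ‖g a - g b‖ ^ 2 ≤ L * (‖g a - g b‖ * ‖a - b‖) := by
    have hhalf : ‖g a - g b‖ ^ 2 = L * (2 * (1 / (2 * L) * ‖g a - g b‖ ^ 2)) := by field_simp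
    rw [hhalf]
    refine mul_le_mul_of_nonneg_left ?_ hL.le
    linarith [real_inner_le_norm (g a - g b) (a - b)]
  by_contra! h
  nlinarith [mul_lt_mul_of_pos_left h ((by positivity : 0 ≤ L * ‖a - b‖).trans_lt h)]

theorem hasFDerivAt_of_sandwich {f : H → ℝ} {g w : H} {L : ℝ}
    (hlow : ∀ z, f w + ⟪g, z - w⟫ ≤ f z)
    (hup : ∀ z, f z ≤ f w + ⟪g, z - w⟫ + L / 2 * ‖z - w‖ ^ 2) :
    HasFDerivAt f (innerSL ℝ g) w := by
  refine hasFDerivAt_of_norm_sub_le_sq (C := L / 2) fun z => ?_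
  rw [Real.norm_eq_abs, abs_le, innerSL_apply_apply]
  constructor <;> linarith [hlow z, hup z]

end InnerProductSpace

theorem norm_sub_right_le_of_lipschitz_prod {E H : Type*} [NormedAddCommGroup E]
    [NormedAddCommGroup H] {Q : Set E} {Gy : E → H → E} {Gx : E → H → H}
    {L : ℝ} (hLip : ∀ y ∈ Q, ∀ y' ∈ Q, ∀ x x' : H,
      √(‖Gy y' x' - Gy y x‖ ^ 2 + ‖Gx y' x' - Gx y x‖ ^ 2) ≤ L * √(‖y' - y‖ ^ 2 + ‖x' - x‖ ^ 2))
    {y : E} (hy : y ∈ Q) (x x' : H) : ‖Gx y x' - Gx y x‖ ≤ L * ‖x' - x‖ := by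
  calc ‖Gx y x' - Gx y x‖ = √(‖Gx y x' - Gx y x‖ ^ 2) := (Real.sqrt_sq (norm_nonneg _)).symm
    _ ≤ √(‖Gy y x' - Gy y x‖ ^ 2 + ‖Gx y x' - Gx y x‖ ^ 2) :=
      Real.sqrt_le_sqrt (le_add_of_nonneg_left (sq_nonneg _))
    _ ≤ L * ‖x' - x‖ := by simpa [Real.sqrt_sq (norm_nonneg _)] using hLip y hy y hy x x'

section MinMin

variable {E H : Type*} [NormedAddCommGroup E] [InnerProductSpace ℝ E]
  [NormedAddCommGroup H] [InnerProductSpace ℝ H]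

def HasPartialGradients (F : E → H → ℝ) (Gy : E → H → E) (Gx : E → H → H) : Prop :=
  ∀ y x, HasFDerivAt (fun p : E × H => F p.1 p.2)
    ((innerSL ℝ (Gy y x)).comp (ContinuousLinearMap.fst ℝ E H)
      + (innerSL ℝ (Gx y x)).comp (ContinuousLinearMap.snd ℝ E H)) (y, x)

namespace HasPartialGradients

variable {F : E → H → ℝ} {Gy : E → H → E} {Gx : E → H → H}

theorem hasFDerivAt_left (h : HasPartialGradients F Gy Gx) (y : E) (x : H) :
    HasFDerivAt (fun y => F y x) (innerSL ℝ (Gy y x)) y := by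
  refine ((h y x).comp y (hasFDerivAt_prodMk_left (𝕜 := ℝ) y x)).congr_fderiv ?_
  ext v
  simp

theorem hasFDerivAt_right (h : HasPartialGradients F Gy Gx) (y : E) (x : H) :
    HasFDerivAt (F y) (innerSL ℝ (Gx y x)) x := by
  refine ((h y x).comp x (hasFDerivAt_prodMk_right (𝕜 := ℝ) y x)).congr_fderiv ?_
  ext v
  simp

theorem add_inner_add_inner_le (h : HasPartialGradients F Gy Gx) {Q : Set E}
    (hconv : ConvexOn ℝ (Q ×ˢ univ) (fun p : E × H => F p.1 p.2))
    {y y' : E} (hy : y ∈ Q) (hy' : y' ∈ Q) (x x' : H) :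
    F y x + ⟪Gy y x, y' - y⟫ + ⟪Gx y x, x' - x⟫ ≤ F y' x' := by
  have := hconv.add_fderiv_sub_le (p := (y', x')) ⟨hy, mem_univ x⟩ ⟨hy', mem_univ x'⟩ (h y x)
  simpa [add_assoc] using this

theorem add_inner_le_of_isMinOn (h : HasPartialGradients F Gy Gx) {Q : Set E}
    (hQ : Convex ℝ Q) (hconv : ConvexOn ℝ (Q ×ˢ univ) (fun p : E × H => F p.1 p.2))
    {y₀ y : E} {w : H} (hmin : IsMinOn (fun y => F y w) Q y₀) (hy₀ : y₀ ∈ Q) (hy : y ∈ Q)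
    (z : H) : F y₀ w + ⟪Gx y₀ w, z - w⟫ ≤ F y z := by
  have hopt := hmin.fderiv_sub_nonneg hQ hy₀ hy (h.hasFDerivAt_left y₀ w)
  have := h.add_inner_add_inner_le hconv hy₀ hy w z
  rw [innerSL_apply_apply] at hopt
  linarith

end HasPartialGradients

end MinMin

theorem stmt18_general {E H : Type*} [NormedAddCommGroup E] [InnerProductSpace ℝ E]
    [NormedAddCommGroup H] [InnerProductSpace ℝ H]
    (Q : Set E) (hQconv : Convex ℝ Q)
    (F : E → H → ℝ)
    (hconv : ConvexOn ℝ (Q ×ˢ (Set.univ : Set H)) (fun p : E × H => F p.1 p.2))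
    (Gy : E → H → E) (Gx : E → H → H)
    (hder : ∀ (y : E) (x : H), HasFDerivAt (fun p : E × H => F p.1 p.2)
      ((innerSL ℝ (Gy y x)).comp (ContinuousLinearMap.fst ℝ E H)
        + (innerSL ℝ (Gx y x)).comp (ContinuousLinearMap.snd ℝ E H)) (y, x))
    (L : ℝ) (hL : 0 < L)
    (hLip : ∀ y ∈ Q, ∀ y' ∈ Q, ∀ x x' : H,
      Real.sqrt (‖Gy y' x' - Gy y x‖ ^ 2 + ‖Gx y' x' - Gx y x‖ ^ 2) ≤
        L * Real.sqrt (‖y' - y‖ ^ 2 + ‖x' - x‖ ^ 2))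
    (f : H → ℝ) (hf : ∀ x : H, IsLeast ((fun y => F y x) '' Q) (f x))
    (x : H) (δ : ℝ) (hδ : 0 ≤ δ)
    (yt : E) (hyt : yt ∈ Q)
    (happrox : ∀ y ∈ Q, -δ ≤ (inner ℝ (Gy yt x) (y - yt) : ℝ)) :
    (F yt x - f x ≤ δ) ∧
    (∃ gf : H → H, (∀ x' : H, HasFDerivAt f (innerSL ℝ (gf x')) x') ∧
      ∀ x' x'' : H, ‖gf x' - gf x''‖ ≤ L * ‖x' - x''‖) ∧
    (∀ z : H,
      0 ≤ f z - (F yt x - 2 * δ) - (inner ℝ (Gx yt x) (z - x) : ℝ) ∧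
      f z - (F yt x - 2 * δ) - (inner ℝ (Gx yt x) (z - x) : ℝ) ≤
        L * ‖z - x‖ ^ 2 + 6 * δ) := by
  have hgrad : HasPartialGradients F Gy Gx := hder
  choose ys hysQ hysEq using fun w => (hf w).1
  have hle : ∀ w, ∀ y ∈ Q, f w ≤ F y w := fun w y hy => (hf w).2 ⟨y, hy, rfl⟩
  have hmin : ∀ w, IsMinOn (fun y => F y w) Q (ys w) := fun w y hy => by
    simpa [hysEq w] using hle w y hy
  have hupper : ∀ y ∈ Q, ∀ w z, F y z ≤ F y w + ⟪Gx y w, z - w⟫ + L / 2 * ‖z - w‖ ^ 2 :=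
    fun y hy => le_add_inner_add_sq_of_lipschitz_gradient (hgrad.hasFDerivAt_right y)
      (norm_sub_right_le_of_lipschitz_prod hLip hy)
  have hlow : ∀ w z, f w + ⟪Gx (ys w) w, z - w⟫ ≤ f z := fun w z => by
    simpa only [hysEq] using
      hgrad.add_inner_le_of_isMinOn hQconv hconv (hmin w) (hysQ w) (hysQ z) z
  have hup : ∀ w z, f z ≤ f w + ⟪Gx (ys w) w, z - w⟫ + L / 2 * ‖z - w‖ ^ 2 := fun w z =>
    (hle z _ (hysQ w)).trans (by simpa only [hysEq] using hupper _ (hysQ w) w z)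
  have hmodel : ∀ z, F yt x - δ + ⟪Gx yt x, z - x⟫ ≤ f z := fun z => by
    linarith [hgrad.add_inner_add_inner_le hconv hyt (hysQ z) x z, happrox (ys z) (hysQ z), hysEq z]
  refine ⟨?_, ⟨fun w => Gx (ys w) w, fun w => hasFDerivAt_of_sandwich (hlow w) (hup w),
    norm_sub_le_of_sandwich hL hlow hup⟩, fun z => ⟨?_, ?_⟩⟩
  · have := hmodel x
    rw [sub_self, inner_zero_right] at this
    linarith
  · linarith [hmodel z]
  · have : 0 ≤ L * ‖z - x‖ ^ 2 := by positivity
    linarith [hle z yt hyt, hupper yt hyt x z]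

/-- min-min problem: Let `F : E × H → ℝ` be jointly convex and
differentiable with partial gradients `∇_y F = Gy`, `∇_x F = Gx` that are
jointly `L`-Lipschitz (w.r.t. the Euclidean product norm, expressed via square
roots of sums of squared norms), let `Q ⊆ E` be convex and closed, and let
`f(x) = min_{y ∈ Q} F(y, x)` (attained). If `ỹ = ỹ ∈ Q` satisfies
`⟨∇_y F(ỹ, x), y − ỹ⟩ ≥ −δ` for all `y ∈ Q`, then
(a) `F(ỹ, x) − f(x) ≤ δ`;
(b) `f` is differentiable with `L`-Lipschitz gradient; and
(c) `(F(ỹ, x) − 2δ, ⟨∇_x F(ỹ, x), · − x⟩)` is a `(6δ, 2L)`-model of `f`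
at `x`: `0 ≤ f(z) − (F(ỹ,x) − 2δ) − ⟨∇_x F(ỹ,x), z − x⟩ ≤ L‖z − x‖² + 6δ`. -/
theorem stmt18 {E H : Type*} [NormedAddCommGroup E] [InnerProductSpace ℝ E]
    [NormedAddCommGroup H] [InnerProductSpace ℝ H]
    (Q : Set E) (hQconv : Convex ℝ Q) (hQclosed : IsClosed Q)
    (F : E → H → ℝ)
    (hconv : ConvexOn ℝ (Q ×ˢ (Set.univ : Set H)) (fun p : E × H => F p.1 p.2))
    (Gy : E → H → E) (Gx : E → H → H)
    (hder : ∀ (y : E) (x : H), HasFDerivAt (fun p : E × H => F p.1 p.2)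
      ((innerSL ℝ (Gy y x)).comp (ContinuousLinearMap.fst ℝ E H)
        + (innerSL ℝ (Gx y x)).comp (ContinuousLinearMap.snd ℝ E H)) (y, x))
    (L : ℝ) (hL : 0 < L)
    (hLip : ∀ y ∈ Q, ∀ y' ∈ Q, ∀ x x' : H,
      Real.sqrt (‖Gy y' x' - Gy y x‖ ^ 2 + ‖Gx y' x' - Gx y x‖ ^ 2) ≤
        L * Real.sqrt (‖y' - y‖ ^ 2 + ‖x' - x‖ ^ 2))
    (f : H → ℝ) (hf : ∀ x : H, IsLeast ((fun y => F y x) '' Q) (f x))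
    (x : H) (δ : ℝ) (hδ : 0 ≤ δ)
    (yt : E) (hyt : yt ∈ Q)
    (happrox : ∀ y ∈ Q, -δ ≤ (inner ℝ (Gy yt x) (y - yt) : ℝ)) :
    (F yt x - f x ≤ δ) ∧
    (∃ gf : H → H, (∀ x' : H, HasFDerivAt f (innerSL ℝ (gf x')) x') ∧
      ∀ x' x'' : H, ‖gf x' - gf x''‖ ≤ L * ‖x' - x''‖) ∧
    (∀ z : H,
      0 ≤ f z - (F yt x - 2 * δ) - (inner ℝ (Gx yt x) (z - x) : ℝ) ∧
      f z - (F yt x - 2 * δ) - (inner ℝ (Gx yt x) (z - x) : ℝ) ≤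
        L * ‖z - x‖ ^ 2 + 6 * δ) :=
  stmt18_general Q hQconv F hconv Gy Gx hder L hL hLip f hf x δ hδ yt hyt happrox
end

section
/- Let Q ⊆ H be convex and closed, φ : Q → ℝ convex, L > 0, and set Λ(x,y) = φ(y) + (L/2)‖y − x‖² and f(x) = min_{y ∈ Q} Λ(x,y) (the minimum over the closed convex set Q of the strongly convex function Λ(x,·) is attained). Fix x ∈ H, δ ≥ 0, and y₀ ∈ Q such that Λ(x,y₀) − Λ(x,y) + (L/2)‖y − y₀‖² ≤ δ for all y ∈ Q. Then for all z ∈ H: 0 ≤ f(z) − (Λ(x,y₀) − δ) − ⟨L·(x − y₀), z − x⟩ ≤ (L/2)‖z − x‖² + δ; that is, the pair (Λ(x,y₀) − δ, ⟨L·(x − y₀), · − x⟩) is a (δ, L)-model of the Moreau-envelope-type function f at x. -/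
/-!
The upper bound is `f z ≤ Λ z y₀`, expanded around `x`. For the lower bound write
`f z = Λ z y` with `y ∈ Q`; the approximation inequality at `y`, combined with the
three-point identity `norm_sub_sq_add_norm_sub_sq_eq`, leaves exactly the slack
`(L/2)‖y − y₀ + (x − z)‖² ≥ 0`.
-/

open RealInnerProductSpace

section

variable {H : Type*} [NormedAddCommGroup H] [InnerProductSpace ℝ H]

theorem norm_sub_sq_add_norm_sub_sq_eq (x y y₀ z : H) :
    ‖y - z‖ ^ 2 + ‖y - y₀‖ ^ 2 =
      ‖y - x‖ ^ 2 + 2 * ⟪x - y₀, z - x⟫ + ‖y - y₀ + (x - z)‖ ^ 2 := by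
  have hz : y - z = (y - x) + (x - z) := by abel
  have hy₀ : y - y₀ = (y - x) + (x - y₀) := by abel
  have hzx : z - x = -(x - z) := by abel
  rw [hz, hy₀, hzx]
  simp only [← real_inner_self_eq_norm_sq, inner_add_left, inner_add_right, inner_neg_right,
    real_inner_comm]
  ring

theorem norm_sub_sq_eq_add_inner (x y₀ z : H) :
    ‖y₀ - z‖ ^ 2 = ‖y₀ - x‖ ^ 2 + 2 * ⟪x - y₀, z - x⟫ + ‖z - x‖ ^ 2 := by
  rw [show y₀ - z = (y₀ - x) - (z - x) by abel, norm_sub_sq_real, ← neg_sub x y₀, inner_neg_left]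
  ring

theorem sub_add_inner_le_of_prox_approx {φ : H → ℝ} {L δ : ℝ} (hL : 0 ≤ L) {x y y₀ : H}
    (happrox : φ y₀ + L / 2 * ‖y₀ - x‖ ^ 2 - (φ y + L / 2 * ‖y - x‖ ^ 2)
      + L / 2 * ‖y - y₀‖ ^ 2 ≤ δ) (z : H) :
    φ y₀ + L / 2 * ‖y₀ - x‖ ^ 2 - δ + ⟪L • (x - y₀), z - x⟫ ≤ φ y + L / 2 * ‖y - z‖ ^ 2 := by
  have key := norm_sub_sq_add_norm_sub_sq_eq x y y₀ z
  rw [real_inner_smul_left]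
  nlinarith [mul_nonneg hL (sq_nonneg ‖y - y₀ + (x - z)‖)]

end

theorem stmt19_general {H : Type*} [NormedAddCommGroup H] [InnerProductSpace ℝ H]
    (Q : Set H)
    (φ : H → ℝ)
    (L : ℝ) (hL : 0 < L)
    (Λ : H → H → ℝ) (hΛ : ∀ x y, Λ x y = φ y + L / 2 * ‖y - x‖ ^ 2)
    (f : H → ℝ) (hf : ∀ x : H, IsLeast ((fun y => Λ x y) '' Q) (f x))
    (x : H) (δ : ℝ)
    (y₀ : H) (hy₀ : y₀ ∈ Q)
    (happrox : ∀ y ∈ Q, Λ x y₀ - Λ x y + L / 2 * ‖y - y₀‖ ^ 2 ≤ δ) :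
    ∀ z : H,
      0 ≤ f z - (Λ x y₀ - δ) - (inner ℝ (L • (x - y₀)) (z - x) : ℝ) ∧
      f z - (Λ x y₀ - δ) - (inner ℝ (L • (x - y₀)) (z - x) : ℝ) ≤
        L / 2 * ‖z - x‖ ^ 2 + δ := by
  intro z
  obtain ⟨⟨y, hy, hfz : Λ z y = f z⟩, hfz_le⟩ := hf z
  have hlower : Λ x y₀ - δ + ⟪L • (x - y₀), z - x⟫ ≤ Λ z y := by
    have happrox_y := happrox y hy
    simp only [hΛ] at happrox_y ⊢
    exact sub_add_inner_le_of_prox_approx hL.le happrox_y z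
  have hupper : f z ≤ Λ x y₀ + ⟪L • (x - y₀), z - x⟫ + L / 2 * ‖z - x‖ ^ 2 :=
    calc f z ≤ Λ z y₀ := hfz_le ⟨y₀, hy₀, rfl⟩
      _ = Λ x y₀ + ⟪L • (x - y₀), z - x⟫ + L / 2 * ‖z - x‖ ^ 2 := by
        rw [hΛ, hΛ, norm_sub_sq_eq_add_inner x y₀ z, real_inner_smul_left]
        ring
  constructor <;> linarith

/-- Moreau-envelope-type / proximal example: Let
`Λ(x,y) = φ(y) + (L/2)‖y − x‖²` with `φ` convex on the closed convex set `Q`,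
and `f(x) = min_{y ∈ Q} Λ(x,y)` (attained). If `y₀ ∈ Q` satisfies
`Λ(x,y₀) − Λ(x,y) + (L/2)‖y − y₀‖² ≤ δ` for all `y ∈ Q`, then
`(Λ(x,y₀) − δ, ⟨L·(x − y₀), · − x⟩)` is a `(δ, L)`-model of `f` at `x`:
`0 ≤ f(z) − (Λ(x,y₀) − δ) − ⟨L·(x − y₀), z − x⟩ ≤ (L/2)‖z − x‖² + δ`. -/
theorem stmt19 {H : Type*} [NormedAddCommGroup H] [InnerProductSpace ℝ H]
    (Q : Set H) (hQconv : Convex ℝ Q) (hQclosed : IsClosed Q)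
    (φ : H → ℝ) (hφ : ConvexOn ℝ Q φ)
    (L : ℝ) (hL : 0 < L)
    (Λ : H → H → ℝ) (hΛ : ∀ x y, Λ x y = φ y + L / 2 * ‖y - x‖ ^ 2)
    (f : H → ℝ) (hf : ∀ x : H, IsLeast ((fun y => Λ x y) '' Q) (f x))
    (x : H) (δ : ℝ) (hδ : 0 ≤ δ)
    (y₀ : H) (hy₀ : y₀ ∈ Q)
    (happrox : ∀ y ∈ Q, Λ x y₀ - Λ x y + L / 2 * ‖y - y₀‖ ^ 2 ≤ δ) :
    ∀ z : H,
      0 ≤ f z - (Λ x y₀ - δ) - (inner ℝ (L • (x - y₀)) (z - x) : ℝ) ∧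
      f z - (Λ x y₀ - δ) - (inner ℝ (L • (x - y₀)) (z - x) : ℝ) ≤
        L / 2 * ‖z - x‖ ^ 2 + δ :=
  stmt19_general Q φ L hL Λ hΛ f hf x δ y₀ hy₀ happrox
end
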